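/- arXiv:2505.11801 — 6 statements merged into one kernel-verified Lean document; each statement's English description precedes it below -/
import Mathlib

section
/- Let m ≥ 1 be an integer, let s > 1 be a real number, and let σ : ℕ → ℝ be positive, nondecreasing, and satisfy σ(p) → ∞ as p → ∞. For ζ = (ζ₁, …, ζ_m) ∈ ℂ^m write ⟨ζ⟩² = ζ₁² + ⋯ + ζ_m². Then the infinite product Q(ζ) = ∏_{p=1}^∞ (1 − ⟨ζ⟩²/(p^{2s} σ(p))) converges for every ζ ∈ ℂ^m, the resulting function Q : ℂ^m → ℂ is entire (holomorphic on all of ℂ^m), and for every δ > 0 there exists a constant C_δ > 0 such that |Q(ζ)| ≤ C_δ · exp(δ ‖ζ‖^{1/s}) for all ζ ∈ ℂ^m. -/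
open scoped BigOperators

/-- The symbol `Q(ζ) = ∏_{p=1}^∞ (1 − ⟨ζ⟩²/(p^{2s} σ(p)))`, where
`⟨ζ⟩² = ζ₁² + ⋯ + ζ_m²` is the holomorphic extension of the squared euclidean norm. -/
noncomputable def Qsymbol (m : ℕ) (s : ℝ) (σ : ℕ → ℝ) (ζ : EuclideanSpace ℂ (Fin m)) : ℂ :=
  ∏' p : ℕ, (1 - (∑ i, ζ i ^ 2) / (((((p : ℝ) + 1) ^ (2 * s) * σ (p + 1)) : ℝ) : ℂ))

namespace QsymbolAux

open Filter Finset

/-- The denominators `c_p = (p+1)^(2s) σ(p+1)`. -/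
noncomputable def cc (s : ℝ) (σ : ℕ → ℝ) (p : ℕ) : ℝ :=
  ((p : ℝ) + 1) ^ (2 * s) * σ (p + 1)

variable {s : ℝ} {σ : ℕ → ℝ}

lemma cc_pos (hσpos : ∀ p, 0 < σ p) (p : ℕ) : 0 < cc s σ p :=
  mul_pos (Real.rpow_pos_of_pos (by positivity) _) (hσpos _)

lemma cc_ge (hs : 1 < s) (hσpos : ∀ p, 0 < σ p) (hσmono : Monotone σ) (p : ℕ) :
    ((p : ℝ) + 1) ^ 2 * σ 1 ≤ cc s σ p := by
  have h1 : (1 : ℝ) ≤ (p : ℝ) + 1 := by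
    have : (0 : ℝ) ≤ (p : ℝ) := Nat.cast_nonneg p
    linarith
  have h2 : ((p : ℝ) + 1) ^ 2 ≤ ((p : ℝ) + 1) ^ (2 * s) := by
    rw [← Real.rpow_natCast ((p : ℝ) + 1) 2]
    exact Real.rpow_le_rpow_of_exponent_le h1 (by push_cast; nlinarith)
  have h3 : σ 1 ≤ σ (p + 1) := hσmono (by omega)
  exact mul_le_mul h2 h3 (hσpos 1).le (by positivity)

lemma summable_sq_inv : Summable (fun p : ℕ => (((p : ℝ) + 1) ^ 2)⁻¹) := by
  have h := (summable_nat_add_iff 1).mpr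
    (Real.summable_one_div_nat_pow.mpr (by norm_num : 1 < 2))
  simpa [one_div] using h

lemma summable_inv_cc (hs : 1 < s) (hσpos : ∀ p, 0 < σ p) (hσmono : Monotone σ) :
    Summable (fun p => (cc s σ p)⁻¹) := by
  refine Summable.of_nonneg_of_le (fun p => inv_nonneg.mpr (cc_pos hσpos p).le) (fun p => ?_)
    (summable_sq_inv.mul_left (σ 1)⁻¹)
  have h1 : (0 : ℝ) < ((p : ℝ) + 1) ^ 2 * σ 1 := by
    have := hσpos 1; positivity
  have h2 : ((p : ℝ) + 1) ^ 2 * σ 1 ≤ cc s σ p := cc_ge hs hσpos hσmono p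
  calc (cc s σ p)⁻¹ ≤ (((p : ℝ) + 1) ^ 2 * σ 1)⁻¹ := inv_anti₀ h1 h2
    _ = (σ 1)⁻¹ * ((((p : ℝ) + 1) ^ 2)⁻¹) := by rw [mul_inv]; ring

lemma exists_cc_ge (hs : 1 < s) (hσpos : ∀ p, 0 < σ p) (hσmono : Monotone σ) (R : ℝ) :
    ∃ N : ℕ, ∀ p, N ≤ p → R ≤ cc s σ p := by
  obtain ⟨n, hn⟩ := exists_nat_ge (R / σ 1)
  refine ⟨n, fun p hp => ?_⟩
  have hp' : (n : ℝ) ≤ (p : ℝ) := by exact_mod_cast hp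
  have hp0 : (0 : ℝ) ≤ (p : ℝ) := Nat.cast_nonneg p
  have h1 : R / σ 1 ≤ ((p : ℝ) + 1) ^ 2 := by nlinarith
  have h2 : R / σ 1 * σ 1 ≤ ((p : ℝ) + 1) ^ 2 * σ 1 :=
    mul_le_mul_of_nonneg_right h1 (hσpos 1).le
  rw [div_mul_cancel₀ _ (ne_of_gt (hσpos 1))] at h2
  exact h2.trans (cc_ge hs hσpos hσmono p)

lemma norm_div_le_half {z : ℂ} {c : ℝ} (hz : 2 * ‖z‖ + 1 ≤ c) :
    ‖z / (c : ℂ)‖ ≤ 1 / 2 := by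
  have h0 : (0 : ℝ) ≤ ‖z‖ := norm_nonneg z
  have hc0 : (0 : ℝ) < c := by linarith
  rw [norm_div, Complex.norm_real, Real.norm_eq_abs, abs_of_pos hc0, div_le_iff₀ hc0]
  linarith

lemma summable_clog (hs : 1 < s) (hσpos : ∀ p, 0 < σ p) (hσmono : Monotone σ) (z : ℂ) :
    Summable (fun p => Complex.log (1 - z / (cc s σ p : ℂ))) := by
  obtain ⟨N, hN⟩ := exists_cc_ge hs hσpos hσmono (2 * ‖z‖ + 1)
  rw [← summable_nat_add_iff N]
  refine Summable.of_norm_bounded (g := fun p => 3 / 2 * ‖z‖ * (cc s σ (p + N))⁻¹)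
    (((summable_nat_add_iff N).mpr (summable_inv_cc hs hσpos hσmono)).mul_left _)
    (fun p => ?_)
  have hc := hN (p + N) (Nat.le_add_left N p)
  have hcp : 0 < cc s σ (p + N) := cc_pos hσpos _
  have h2 : ‖-(z / (cc s σ (p + N) : ℂ))‖ ≤ 1 / 2 := by
    rw [norm_neg]; exact norm_div_le_half hc
  have hrw : (1 : ℂ) - z / (cc s σ (p + N) : ℂ) = 1 + -(z / (cc s σ (p + N) : ℂ)) := by ring
  rw [hrw]
  calc ‖Complex.log (1 + -(z / (cc s σ (p + N) : ℂ)))‖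
      ≤ 3 / 2 * ‖-(z / (cc s σ (p + N) : ℂ))‖ := Complex.norm_log_one_add_half_le_self h2
    _ = 3 / 2 * ‖z‖ * (cc s σ (p + N))⁻¹ := by
        rw [norm_neg, norm_div, Complex.norm_real, Real.norm_eq_abs, abs_of_pos hcp,
          div_eq_mul_inv]
        ring

lemma multipliable_aux (hs : 1 < s) (hσpos : ∀ p, 0 < σ p) (hσmono : Monotone σ) (z : ℂ) :
    Multipliable (fun p => 1 - z / (cc s σ p : ℂ)) := by
  obtain ⟨N, hN⟩ := exists_cc_ge hs hσpos hσmono (2 * ‖z‖ + 1)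
  have hlog : Summable (fun p => Complex.log (1 - z / (cc s σ (p + N) : ℂ))) :=
    (summable_nat_add_iff N).mpr (summable_clog hs hσpos hσmono z)
  have hne : ∀ p : ℕ, (1 : ℂ) - z / (cc s σ (p + N) : ℂ) ≠ 0 := by
    intro p h
    have h2 := norm_div_le_half (hN (p + N) (Nat.le_add_left N p))
    have h3 : z / (cc s σ (p + N) : ℂ) = 1 := by
      have := sub_eq_zero.mp h; exact this.symm
    rw [h3] at h2; norm_num at h2
  have hp : HasProd (fun p => 1 - z / (cc s σ (p + N) : ℂ))
      (Complex.exp (∑' p, Complex.log (1 - z / (cc s σ (p + N) : ℂ)))) := by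
    have h1 := hlog.hasSum.cexp
    have h2 : (Complex.exp ∘ fun p => Complex.log (1 - z / (cc s σ (p + N) : ℂ)))
        = fun p => 1 - z / (cc s σ (p + N) : ℂ) :=
      funext fun p => Complex.exp_log (hne p)
    rwa [h2] at h1
  exact (HasProd.prod_range_mul (f := fun p => 1 - z / (cc s σ p : ℂ)) (k := N)
    hp).multipliable

lemma summable_rlog (hs : 1 < s) (hσpos : ∀ p, 0 < σ p) (hσmono : Monotone σ)
    {u : ℝ} (hu : 0 ≤ u) :
    Summable (fun p => Real.log (1 + u / cc s σ p)) := by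
  refine Summable.of_nonneg_of_le
    (fun p => Real.log_nonneg (le_add_of_nonneg_right (div_nonneg hu (cc_pos hσpos p).le)))
    (fun p => ?_) ((summable_inv_cc hs hσpos hσmono).mul_left u)
  have hx : 0 ≤ u / cc s σ p := div_nonneg hu (cc_pos hσpos p).le
  calc Real.log (1 + u / cc s σ p) ≤ 1 + u / cc s σ p - 1 :=
        Real.log_le_sub_one_of_pos (by linarith)
    _ = u * (cc s σ p)⁻¹ := by rw [div_eq_mul_inv]; ring

lemma norm_tprod_le (hs : 1 < s) (hσpos : ∀ p, 0 < σ p) (hσmono : Monotone σ) (z : ℂ) :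
    ‖∏' p, (1 - z / (cc s σ p : ℂ))‖
      ≤ Real.exp (∑' p, Real.log (1 + ‖z‖ / cc s σ p)) := by
  have hmul := multipliable_aux hs hσpos hσmono z
  have ht : Filter.Tendsto (fun F : Finset ℕ => ∏ p ∈ F, (1 - z / (cc s σ p : ℂ)))
      Filter.atTop (nhds (∏' p, (1 - z / (cc s σ p : ℂ)))) := hmul.hasProd
  have ht2 := ht.norm
  refine le_of_tendsto' ht2 (fun F => ?_)
  have hpos : ∀ p : ℕ, (0 : ℝ) < 1 + ‖z‖ / cc s σ p := by
    intro p
    have : 0 ≤ ‖z‖ / cc s σ p := div_nonneg (norm_nonneg z) (cc_pos hσpos p).le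
    linarith
  calc ‖∏ p ∈ F, (1 - z / (cc s σ p : ℂ))‖
      = ∏ p ∈ F, ‖1 - z / (cc s σ p : ℂ)‖ := norm_prod F _
    _ ≤ ∏ p ∈ F, (1 + ‖z‖ / cc s σ p) := by
        refine Finset.prod_le_prod (fun p _ => norm_nonneg _) (fun p _ => ?_)
        have hc := cc_pos (s := s) hσpos p
        calc ‖1 - z / (cc s σ p : ℂ)‖ ≤ ‖(1 : ℂ)‖ + ‖z / (cc s σ p : ℂ)‖ := norm_sub_le _ _
          _ = 1 + ‖z‖ / cc s σ p := by
              rw [norm_one, norm_div, Complex.norm_real, Real.norm_eq_abs, abs_of_pos hc]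
    _ = ∏ p ∈ F, Real.exp (Real.log (1 + ‖z‖ / cc s σ p)) := by
        exact Finset.prod_congr rfl (fun p _ => (Real.exp_log (hpos p)).symm)
    _ = Real.exp (∑ p ∈ F, Real.log (1 + ‖z‖ / cc s σ p)) := (Real.exp_sum F _).symm
    _ ≤ Real.exp (∑' p, Real.log (1 + ‖z‖ / cc s σ p)) := by
        refine Real.exp_le_exp.mpr (Summable.sum_le_tsum F (fun p _ => Real.log_nonneg ?_)
          (summable_rlog hs hσpos hσmono (norm_nonneg z)))
        have : 0 ≤ ‖z‖ / cc s σ p := div_nonneg (norm_nonneg z) (cc_pos hσpos p).le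
        linarith

/-! ### Real analytic estimates -/

lemma log_factorial_lb (n : ℕ) :
    (n : ℝ) * Real.log n - n ≤ Real.log (n.factorial) := by
  induction n with
  | zero => simp
  | succ n ih =>
    have hfact : (0 : ℝ) < (n.factorial : ℝ) := by
      exact_mod_cast n.factorial_pos
    have hn1 : (0 : ℝ) < (n : ℝ) + 1 := by positivity
    rw [Nat.factorial_succ, Nat.cast_mul, Real.log_mul (by positivity) (ne_of_gt hfact)]
    have key : (n : ℝ) * Real.log ((n : ℝ) + 1) ≤ (n : ℝ) * Real.log n + 1 := by
      rcases Nat.eq_zero_or_pos n with h0 | hpos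
      · subst h0; norm_num
      · have hn0 : (0 : ℝ) < (n : ℝ) := by exact_mod_cast hpos
        have hdiv : Real.log ((n : ℝ) + 1) - Real.log n = Real.log (1 + 1 / (n : ℝ)) := by
          rw [← Real.log_div (by positivity) (ne_of_gt hn0)]
          congr 1; field_simp
        have h2 : Real.log (1 + 1 / (n : ℝ)) ≤ 1 / (n : ℝ) := by
          have := Real.log_le_sub_one_of_pos (show (0 : ℝ) < 1 + 1 / (n : ℝ) by positivity)
          linarith
        have h3 : Real.log ((n : ℝ) + 1) ≤ Real.log n + 1 / (n : ℝ) := by linarith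
        calc (n : ℝ) * Real.log ((n : ℝ) + 1) ≤ (n : ℝ) * (Real.log n + 1 / (n : ℝ)) :=
              mul_le_mul_of_nonneg_left h3 hn0.le
          _ = (n : ℝ) * Real.log n + 1 := by
              rw [mul_add, mul_one_div, div_self (ne_of_gt hn0)]
    push_cast
    linarith [ih, key]

lemma sum_log_eq (n : ℕ) :
    ∑ p ∈ Finset.range n, Real.log ((p : ℝ) + 1) = Real.log (n.factorial) := by
  induction n with
  | zero => simp
  | succ n ih =>
    have hfact : (0 : ℝ) < (n.factorial : ℝ) := by exact_mod_cast n.factorial_pos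
    rw [Finset.sum_range_succ, ih, Nat.factorial_succ, Nat.cast_mul,
      Real.log_mul (by positivity) (ne_of_gt hfact)]
    push_cast
    ring

lemma sum_inv_sq_le (P : ℕ) :
    ∑ p ∈ Finset.range P, (((p : ℝ) + 1) ^ 2)⁻¹ ≤ 2 - 2 / ((P : ℝ) + 1) := by
  induction P with
  | zero => norm_num
  | succ P ih =>
    rw [Finset.sum_range_succ]
    have hP0 : (0 : ℝ) < (P : ℝ) + 1 := by positivity
    have hP1 : (0 : ℝ) < (P : ℝ) + 2 := by positivity
    have hterm : (((P : ℝ) + 1) ^ 2)⁻¹ ≤ 2 / ((P : ℝ) + 1) - 2 / ((P : ℝ) + 2) := by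
      have h1 : ((P : ℝ) + 1) * ((P : ℝ) + 2) ≤ 2 * ((P : ℝ) + 1) ^ 2 := by
        nlinarith [Nat.cast_nonneg (α := ℝ) P]
      have h2 := inv_anti₀ (show (0 : ℝ) < ((P : ℝ) + 1) * ((P : ℝ) + 2) by positivity) h1
      have h3 : 2 / ((P : ℝ) + 1) - 2 / ((P : ℝ) + 2)
          = 2 * (((P : ℝ) + 1) * ((P : ℝ) + 2))⁻¹ := by
        field_simp
        ring
      have h4 : (((P : ℝ) + 1) ^ 2)⁻¹ = 2 * (2 * ((P : ℝ) + 1) ^ 2)⁻¹ := by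
        rw [mul_inv]
        field_simp
      rw [h3, h4]
      linarith [mul_le_mul_of_nonneg_left h2 (show (0 : ℝ) ≤ 2 by norm_num)]
    push_cast
    have hrw : ((P : ℝ) + 1 + 1) = (P : ℝ) + 2 := by ring
    rw [hrw]
    linarith

lemma tsum_inv_sq : ∑' p : ℕ, (((p : ℝ) + 1) ^ 2)⁻¹ ≤ 2 := by
  refine Real.tsum_le_of_sum_range_le (fun p => by positivity) (fun P => ?_)
  have := sum_inv_sq_le P
  have h0 : (0 : ℝ) < (P : ℝ) + 1 := by positivity
  have : 0 ≤ 2 / ((P : ℝ) + 1) := by positivity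
  linarith [sum_inv_sq_le P]

lemma tsum_inv_sq_tail {n : ℕ} (hn : 1 ≤ n) :
    ∑' p : ℕ, (((p : ℝ) + n + 1) ^ 2)⁻¹ ≤ 1 / (n : ℝ) := by
  have hn0 : (1 : ℝ) ≤ (n : ℝ) := by exact_mod_cast hn
  refine Real.tsum_le_of_sum_range_le (fun p => by positivity) (fun P => ?_)
  have key : ∀ Q : ℕ, ∑ p ∈ Finset.range Q, (((p : ℝ) + n + 1) ^ 2)⁻¹
      ≤ 1 / (n : ℝ) - 1 / ((n : ℝ) + Q) := by
    intro Q
    induction Q with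
    | zero => simp
    | succ Q ihQ =>
      rw [Finset.sum_range_succ]
      have h1 : (0 : ℝ) < (n : ℝ) + Q := by positivity
      have h2 : (0 : ℝ) < (n : ℝ) + Q + 1 := by positivity
      have hterm : (((Q : ℝ) + n + 1) ^ 2)⁻¹ ≤ 1 / ((n : ℝ) + Q) - 1 / ((n : ℝ) + Q + 1) := by
        have heq : 1 / ((n : ℝ) + Q) - 1 / ((n : ℝ) + Q + 1)
            = (((n : ℝ) + Q) * ((n : ℝ) + Q + 1))⁻¹ := by
          rw [div_sub_div _ _ (ne_of_gt h1) (ne_of_gt h2)]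
          have hnum : (1 * ((n : ℝ) + Q + 1) - ((n : ℝ) + Q) * 1) = 1 := by ring
          rw [hnum, one_div]
        rw [heq]
        apply inv_anti₀ (by positivity)
        nlinarith
      push_cast
      have hrw : (n : ℝ) + ((Q : ℝ) + 1) = (n : ℝ) + (Q : ℝ) + 1 := by ring
      rw [hrw]
      linarith
  have h3 : (0 : ℝ) < (n : ℝ) + P := by positivity
  have : 0 ≤ 1 / ((n : ℝ) + P) := by positivity
  linarith [key P]

lemma rpow_base_ge (hs : 1 < s) (p : ℕ) :
    ((p : ℝ) + 1) ^ 2 ≤ ((p : ℝ) + 1) ^ (2 * s) := by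
  have h1 : (1 : ℝ) ≤ (p : ℝ) + 1 := by
    have : (0 : ℝ) ≤ (p : ℝ) := Nat.cast_nonneg p
    linarith
  rw [← Real.rpow_natCast ((p : ℝ) + 1) 2]
  exact Real.rpow_le_rpow_of_exponent_le h1 (by push_cast; nlinarith)

lemma summable_logT (hs : 1 < s) {w : ℝ} (hw : 0 ≤ w) :
    Summable (fun p : ℕ => Real.log (1 + w / ((p : ℝ) + 1) ^ (2 * s))) := by
  have hb : ∀ p : ℕ, (0 : ℝ) < ((p : ℝ) + 1) ^ (2 * s) :=
    fun p => Real.rpow_pos_of_pos (by positivity) _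
  refine Summable.of_nonneg_of_le
    (fun p => Real.log_nonneg (le_add_of_nonneg_right (div_nonneg hw (hb p).le)))
    (fun p => ?_) (summable_sq_inv.mul_left w)
  have h1 : Real.log (1 + w / ((p : ℝ) + 1) ^ (2 * s)) ≤ w / ((p : ℝ) + 1) ^ (2 * s) := by
    have h0 : 0 ≤ w / ((p : ℝ) + 1) ^ (2 * s) := div_nonneg hw (hb p).le
    have := Real.log_le_sub_one_of_pos (show (0:ℝ) < 1 + w / ((p : ℝ) + 1) ^ (2 * s) by linarith)
    linarith
  have h2 : w / ((p : ℝ) + 1) ^ (2 * s) ≤ w / ((p : ℝ) + 1) ^ 2 :=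
    div_le_div_of_nonneg_left hw (by positivity) (rpow_base_ge hs p)
  calc Real.log (1 + w / ((p : ℝ) + 1) ^ (2 * s)) ≤ w / ((p : ℝ) + 1) ^ 2 := h1.trans h2
    _ = w * ((((p : ℝ) + 1) ^ 2)⁻¹) := by rw [div_eq_mul_inv]

set_option maxHeartbeats 1600000 in
lemma T_bound (hs : 1 < s) {w : ℝ} (hw : 0 ≤ w) :
    ∑' p : ℕ, Real.log (1 + w / ((p : ℝ) + 1) ^ (2 * s))
      ≤ (4 * s + 4) * (1 + w ^ (1 / (2 * s))) := by
  have h2s : (0 : ℝ) < 2 * s := by linarith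
  have hb : ∀ p : ℕ, (0 : ℝ) < ((p : ℝ) + 1) ^ (2 * s) :=
    fun p => Real.rpow_pos_of_pos (by positivity) _
  have hlognn : ∀ p : ℕ, 0 ≤ Real.log (1 + w / ((p : ℝ) + 1) ^ (2 * s)) :=
    fun p => Real.log_nonneg (le_add_of_nonneg_right (div_nonneg hw (hb p).le))
  have hrnn : 0 ≤ w ^ (1 / (2 * s)) := Real.rpow_nonneg hw _
  by_cases hw1 : w ≤ 1
  · calc ∑' p : ℕ, Real.log (1 + w / ((p : ℝ) + 1) ^ (2 * s))
        ≤ ∑' p : ℕ, w * ((((p : ℝ) + 1) ^ 2)⁻¹) := by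
          refine Summable.tsum_le_tsum (fun p => ?_) (summable_logT hs hw) (summable_sq_inv.mul_left w)
          have h0 : 0 ≤ w / ((p : ℝ) + 1) ^ (2 * s) := div_nonneg hw (hb p).le
          have hlg := Real.log_le_sub_one_of_pos
            (show (0:ℝ) < 1 + w / ((p : ℝ) + 1) ^ (2 * s) by linarith)
          have h2 : w / ((p : ℝ) + 1) ^ (2 * s) ≤ w / ((p : ℝ) + 1) ^ 2 :=
            div_le_div_of_nonneg_left hw (by positivity) (rpow_base_ge hs p)
          have h3 : w / ((p : ℝ) + 1) ^ 2 = w * ((((p : ℝ) + 1) ^ 2)⁻¹) :=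
            div_eq_mul_inv _ _
          linarith
      _ = w * ∑' p : ℕ, (((p : ℝ) + 1) ^ 2)⁻¹ := tsum_mul_left
      _ ≤ 1 * 2 := by
          refine mul_le_mul hw1 tsum_inv_sq (tsum_nonneg (fun p => by positivity)) one_pos.le

      _ ≤ (4 * s + 4) * (1 + w ^ (1 / (2 * s))) := by nlinarith
  · push_neg at hw1
    have hw0 : (0 : ℝ) < w := by linarith
    set v := w ^ (1 / (2 * s)) with hv
    have hv1 : 1 ≤ v := Real.one_le_rpow hw1.le (by positivity)
    have hv0 : (0 : ℝ) < v := by linarith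
    have hwv : v ^ (2 * s) = w := by
      rw [hv, ← Real.rpow_mul hw0.le, one_div, inv_mul_cancel₀ (ne_of_gt h2s), Real.rpow_one]
    set n := ⌊v⌋₊ with hn
    have hn1 : 1 ≤ n := Nat.le_floor (by exact_mod_cast hv1)
    have hnv : (n : ℝ) ≤ v := Nat.floor_le hv0.le
    have hvn : v < (n : ℝ) + 1 := Nat.lt_floor_add_one v
    have hnR : (1 : ℝ) ≤ (n : ℝ) := by exact_mod_cast hn1
    have hv2n : v ≤ 2 * n := by linarith
    have hsum := summable_logT hs hw
    rw [← Summable.sum_add_tsum_nat_add n hsum]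
    -- head estimate
    have hL2a : Real.log 2 ≤ 1 := by
      have := Real.log_le_sub_one_of_pos (show (0:ℝ) < 2 by norm_num); linarith
    have hL2b : 0 ≤ Real.log 2 := Real.log_nonneg one_le_two
    have hterm : ∀ p ∈ Finset.range n,
        Real.log (1 + w / ((p : ℝ) + 1) ^ (2 * s))
          ≤ Real.log 2 + 2 * s * Real.log v - 2 * s * Real.log ((p : ℝ) + 1) := by
      intro p hp
      have hpn : (p : ℝ) + 1 ≤ v := by
        have hlt : p + 1 ≤ n := Finset.mem_range.mp hp
        have : ((p : ℝ) + 1) ≤ (n : ℝ) := by exact_mod_cast hlt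
        linarith
      have hb0 := hb p
      have hle : ((p : ℝ) + 1) ^ (2 * s) ≤ w := by
        rw [← hwv]; exact Real.rpow_le_rpow (by positivity) hpn h2s.le
      have h1w : 1 ≤ w / ((p : ℝ) + 1) ^ (2 * s) := (one_le_div hb0).mpr hle
      have hstep : 1 + w / ((p : ℝ) + 1) ^ (2 * s) ≤ 2 * (w / ((p : ℝ) + 1) ^ (2 * s)) := by
        linarith
      calc Real.log (1 + w / ((p : ℝ) + 1) ^ (2 * s))
          ≤ Real.log (2 * (w / ((p : ℝ) + 1) ^ (2 * s))) := Real.log_le_log (by linarith) hstep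
        _ = Real.log 2 + (Real.log w - Real.log (((p : ℝ) + 1) ^ (2 * s))) := by
            rw [Real.log_mul two_ne_zero (by positivity),
              Real.log_div (ne_of_gt hw0) (ne_of_gt hb0)]
        _ = Real.log 2 + 2 * s * Real.log v - 2 * s * Real.log ((p : ℝ) + 1) := by
            rw [Real.log_rpow (by positivity), ← hwv, Real.log_rpow hv0]; ring
    have headle : ∑ p ∈ Finset.range n, Real.log (1 + w / ((p : ℝ) + 1) ^ (2 * s))
        ≤ (n : ℝ) * Real.log 2 + 2 * s * ((n : ℝ) * Real.log v)
          - 2 * s * Real.log (n.factorial) := by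
      calc ∑ p ∈ Finset.range n, Real.log (1 + w / ((p : ℝ) + 1) ^ (2 * s))
          ≤ ∑ p ∈ Finset.range n,
              (Real.log 2 + 2 * s * Real.log v - 2 * s * Real.log ((p : ℝ) + 1)) :=
            Finset.sum_le_sum hterm
        _ = (n : ℝ) * Real.log 2 + 2 * s * ((n : ℝ) * Real.log v)
              - 2 * s * Real.log (n.factorial) := by
            have e1 : ∑ p ∈ Finset.range n,
                (Real.log 2 + 2 * s * Real.log v - 2 * s * Real.log ((p : ℝ) + 1))
                = (n : ℝ) * (Real.log 2 + 2 * s * Real.log v)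
                  - 2 * s * ∑ p ∈ Finset.range n, Real.log ((p : ℝ) + 1) := by
              rw [Finset.sum_sub_distrib, Finset.sum_const, Finset.card_range,
                ← Finset.mul_sum, nsmul_eq_mul]
            rw [e1, sum_log_eq n]
            ring
    have hlogv : Real.log v ≤ Real.log n + Real.log 2 := by
      have hv2 : v ≤ (n : ℝ) * 2 := by linarith
      calc Real.log v ≤ Real.log ((n : ℝ) * 2) := Real.log_le_log hv0 hv2
        _ = Real.log n + Real.log 2 := Real.log_mul (by positivity) two_ne_zero
    have hfac := log_factorial_lb n
    have hlognn' : 0 ≤ Real.log (n : ℝ) := Real.log_nonneg hnR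
    have hlogvnn : 0 ≤ Real.log v := Real.log_nonneg hv1
    have hhead : ∑ p ∈ Finset.range n, Real.log (1 + w / ((p : ℝ) + 1) ^ (2 * s))
        ≤ (4 * s + 1) * v := by
      have m1 : 2 * s * ((n : ℝ) * Real.log (n : ℝ) - (n : ℝ)) ≤ 2 * s * Real.log (n.factorial) :=
        mul_le_mul_of_nonneg_left hfac h2s.le
      have m2 : 2 * s * ((n : ℝ) * Real.log v)
          ≤ 2 * s * ((n : ℝ) * (Real.log (n : ℝ) + Real.log 2)) := by
        refine mul_le_mul_of_nonneg_left ?_ h2s.le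
        exact mul_le_mul_of_nonneg_left hlogv (by positivity)
      have m3 : (n : ℝ) * Real.log 2 ≤ (n : ℝ) * 1 :=
        mul_le_mul_of_nonneg_left hL2a (by positivity)
      have m4 : 2 * s * ((n : ℝ) * Real.log 2) ≤ 2 * s * ((n : ℝ) * 1) :=
        mul_le_mul_of_nonneg_left m3 h2s.le
      have m5 : (n : ℝ) * (4 * s + 1) ≤ v * (4 * s + 1) :=
        mul_le_mul_of_nonneg_right hnv (by linarith)
      nlinarith [headle]
    -- tail estimate
    have htail : ∑' p : ℕ, Real.log (1 + w / (((p + n : ℕ) : ℝ) + 1) ^ (2 * s)) ≤ 2 * v := by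
      have hmaj : ∀ p : ℕ, Real.log (1 + w / (((p + n : ℕ) : ℝ) + 1) ^ (2 * s))
          ≤ (w * v ^ (2 - 2 * s)) * ((((p : ℝ) + n + 1) ^ 2)⁻¹) := by
        intro p
        have hcast : (((p + n : ℕ) : ℝ) + 1) = (p : ℝ) + n + 1 := by push_cast; ring
        rw [hcast]
        set q : ℝ := (p : ℝ) + n + 1 with hq
        have hq0 : (0 : ℝ) < q := by positivity
        have hvq : v ≤ q := by
          have : (0:ℝ) ≤ (p : ℝ) := Nat.cast_nonneg p
          simp only [hq]; linarith
        have hqs : (0 : ℝ) < q ^ (2 * s) := Real.rpow_pos_of_pos hq0 _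
        have hsplit : q ^ (2 * s) = q ^ (2 : ℝ) * q ^ (2 * s - 2) := by
          rw [← Real.rpow_add hq0]; ring_nf
        have h1 : v ^ (2 * s - 2) ≤ q ^ (2 * s - 2) :=
          Real.rpow_le_rpow hv0.le hvq (by linarith)
        have h2 : q ^ (2 : ℝ) * v ^ (2 * s - 2) ≤ q ^ (2 * s) := by
          rw [hsplit]
          exact mul_le_mul_of_nonneg_left h1 (Real.rpow_nonneg hq0.le _)
        have hpos2 : (0 : ℝ) < q ^ (2 : ℝ) * v ^ (2 * s - 2) :=
          mul_pos (Real.rpow_pos_of_pos hq0 _) (Real.rpow_pos_of_pos hv0 _)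
        have h3 : w / q ^ (2 * s) ≤ w / (q ^ (2 : ℝ) * v ^ (2 * s - 2)) :=
          div_le_div_of_nonneg_left hw hpos2 h2
        have h4 : Real.log (1 + w / q ^ (2 * s)) ≤ w / q ^ (2 * s) := by
          have h0 : 0 ≤ w / q ^ (2 * s) := div_nonneg hw hqs.le
          have := Real.log_le_sub_one_of_pos (show (0:ℝ) < 1 + w / q ^ (2 * s) by linarith)
          linarith
        have h5 : w / (q ^ (2 : ℝ) * v ^ (2 * s - 2))
            = (w * v ^ (2 - 2 * s)) * ((q ^ 2)⁻¹) := by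
          have hv22 : v ^ (2 - 2 * s) = (v ^ (2 * s - 2))⁻¹ := by
            rw [← Real.rpow_neg hv0.le]; ring_nf
          have hq2 : q ^ (2 : ℝ) = q ^ 2 := by
            rw [← Real.rpow_natCast q 2]; norm_num
          rw [hv22, hq2, div_eq_mul_inv, mul_inv]
          ring
        rw [← h5]
        exact h4.trans h3
      have hsummaj : Summable (fun p : ℕ => (w * v ^ (2 - 2 * s)) * ((((p : ℝ) + n + 1) ^ 2)⁻¹)) := by
        apply Summable.mul_left
        have h := (summable_nat_add_iff n).mpr summable_sq_inv
        refine h.congr (fun p => ?_)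
        push_cast
        ring_nf
      calc ∑' p : ℕ, Real.log (1 + w / (((p + n : ℕ) : ℝ) + 1) ^ (2 * s))
          ≤ ∑' p : ℕ, (w * v ^ (2 - 2 * s)) * ((((p : ℝ) + n + 1) ^ 2)⁻¹) :=
            Summable.tsum_le_tsum hmaj ((summable_nat_add_iff n).mpr hsum) hsummaj
        _ = (w * v ^ (2 - 2 * s)) * ∑' p : ℕ, (((p : ℝ) + n + 1) ^ 2)⁻¹ := tsum_mul_left
        _ ≤ (w * v ^ (2 - 2 * s)) * (1 / n) := by
            refine mul_le_mul_of_nonneg_left (tsum_inv_sq_tail hn1) ?_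
            have := Real.rpow_nonneg hv0.le (2 - 2 * s)
            positivity
        _ ≤ 2 * v := by
            have hwv2 : w * v ^ (2 - 2 * s) = v ^ 2 := by
              rw [← hwv, ← Real.rpow_add hv0]
              have : 2 * s + (2 - 2 * s) = ((2 : ℕ) : ℝ) := by push_cast; ring
              rw [this, Real.rpow_natCast]
            rw [hwv2]
            have h1n : (1 : ℝ) / n ≤ 2 / v := by
              rw [div_le_div_iff₀ (by positivity) hv0]
              linarith
            have h6 : v ^ 2 * (1 / (n : ℝ)) ≤ v ^ 2 * (2 / v) :=
              mul_le_mul_of_nonneg_left h1n (by positivity)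
            have h7 : v ^ 2 * (2 / v) = 2 * v := by field_simp
            linarith
    have hnn2 : 0 ≤ ∑' p : ℕ, Real.log (1 + w / (((p + n : ℕ) : ℝ) + 1) ^ (2 * s)) := by
      exact tsum_nonneg (fun p => hlognn _)
    nlinarith [hhead, htail, hv1, hrnn]

lemma log_le_rpow_div {x ε : ℝ} (hx : 0 ≤ x) (hε : 0 < ε) :
    Real.log (1 + x) ≤ (1 + x) ^ ε / ε := by
  have h1 : Real.log ((1 + x) ^ ε) = ε * Real.log (1 + x) := Real.log_rpow (by linarith) ε
  have h2 : Real.log ((1 + x) ^ ε) ≤ (1 + x) ^ ε - 1 :=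
    Real.log_le_sub_one_of_pos (Real.rpow_pos_of_pos (by linarith) _)
  rw [le_div_iff₀ hε]
  nlinarith
lemma rpow_one_add_le {x ε : ℝ} (hx : 0 ≤ x) (hε0 : 0 < ε) (hε1 : ε ≤ 1) :
    (1 + x) ^ ε ≤ 2 * (1 + x ^ ε) := by
  have hxε : 0 ≤ x ^ ε := Real.rpow_nonneg hx _
  have h2ε : (2 : ℝ) ^ ε ≤ 2 := by
    calc (2 : ℝ) ^ ε ≤ (2 : ℝ) ^ (1 : ℝ) := Real.rpow_le_rpow_of_exponent_le one_le_two hε1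
      _ = 2 := Real.rpow_one 2
  rcases le_total x 1 with h | h
  · have : (1 + x) ^ ε ≤ (2 : ℝ) ^ ε :=
      Real.rpow_le_rpow (by linarith) (by linarith) hε0.le
    linarith
  · have h1 : (1 + x) ^ ε ≤ (2 * x) ^ ε :=
      Real.rpow_le_rpow (by linarith) (by linarith) hε0.le
    have h2 : (2 * x) ^ ε = 2 ^ ε * x ^ ε := Real.mul_rpow (by norm_num) hx
    have h3 : 2 ^ ε * x ^ ε ≤ 2 * x ^ ε := mul_le_mul_of_nonneg_right h2ε hxε
    have h4 : 2 * x ^ ε ≤ 2 * (1 + x ^ ε) := by linarith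
    linarith

lemma sqrt_amgm {x b η : ℝ} (hx : 0 ≤ x) (hb : 0 ≤ b) (hη : 0 < η) :
    b * x ^ ((2 : ℝ)⁻¹) ≤ η * x + b ^ 2 / (4 * η) := by
  set y := x ^ ((2 : ℝ)⁻¹) with hy
  have hy0 : 0 ≤ y := Real.rpow_nonneg hx _
  have hy2 : y ^ 2 = x := by
    rw [hy, ← Real.rpow_natCast (x ^ ((2:ℝ)⁻¹)) 2, ← Real.rpow_mul hx]
    norm_num
  have e : b ^ 2 / (4 * η) * (4 * η) = b ^ 2 := by field_simp
  have key : b * y ≤ η * y ^ 2 + b ^ 2 / (4 * η) := by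
    nlinarith [sq_nonneg (2 * η * y - b), hη]
  rw [← hy2]
  exact key

lemma log_aux (hs : 1 < s) {a b η : ℝ} (ha : 0 ≤ a) (hb : 0 ≤ b) (hη : 0 < η) :
    ∃ C : ℝ, 0 < C ∧ ∀ u, 0 ≤ u →
      a * Real.log (1 + b * u) ≤ η * u ^ (1 / (2 * s)) + C := by
  have hs0 : (0 : ℝ) < s := by linarith
  set ε := 1 / (4 * s) with hε
  have hε0 : 0 < ε := by positivity
  have hε1 : ε ≤ 1 := by
    rw [hε, div_le_one (by positivity)]; linarith
  set B := 2 * a / ε * b ^ ε with hB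
  have hB0 : 0 ≤ B := by
    have : 0 ≤ b ^ ε := Real.rpow_nonneg hb _
    positivity
  refine ⟨2 * a / ε + B ^ 2 / (4 * η) + 1, by positivity, fun u hu => ?_⟩
  have hbu : 0 ≤ b * u := mul_nonneg hb hu
  have h1 : Real.log (1 + b * u) ≤ (1 + b * u) ^ ε / ε := log_le_rpow_div hbu hε0
  have h2 : (1 + b * u) ^ ε ≤ 2 * (1 + (b * u) ^ ε) := rpow_one_add_le hbu hε0 hε1
  have h3 : (b * u) ^ ε = b ^ ε * u ^ ε := Real.mul_rpow hb hu
  have h4 : a * Real.log (1 + b * u) ≤ 2 * a / ε + B * u ^ ε := by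
    have huε : 0 ≤ u ^ ε := Real.rpow_nonneg hu _
    have hc : Real.log (1 + b * u) ≤ 2 / ε + 2 / ε * (b ^ ε * u ^ ε) := by
      calc Real.log (1 + b * u) ≤ (1 + b * u) ^ ε / ε := h1
        _ ≤ 2 * (1 + (b * u) ^ ε) / ε := (div_le_div_iff_of_pos_right hε0).mpr h2
        _ = 2 / ε + 2 / ε * (b ^ ε * u ^ ε) := by rw [h3]; field_simp
    calc a * Real.log (1 + b * u) ≤ a * (2 / ε + 2 / ε * (b ^ ε * u ^ ε)) :=
        mul_le_mul_of_nonneg_left hc ha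
      _ = 2 * a / ε + B * u ^ ε := by rw [hB]; ring
  have h5 : u ^ ε = (u ^ (1 / (2 * s))) ^ ((2 : ℝ)⁻¹) := by
    rw [← Real.rpow_mul hu]
    congr 1
    rw [hε]
    field_simp
    ring
  have h6 : B * (u ^ (1 / (2 * s))) ^ ((2 : ℝ)⁻¹)
      ≤ η * u ^ (1 / (2 * s)) + B ^ 2 / (4 * η) :=
    sqrt_amgm (Real.rpow_nonneg hu _) hB0 hη
  rw [h5] at h4
  linarith



set_option maxHeartbeats 1600000 in
lemma S_bound (hs : 1 < s) (hσpos : ∀ p, 0 < σ p) (hσmono : Monotone σ)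
    (hσtop : Filter.Tendsto σ Filter.atTop Filter.atTop) {δ : ℝ} (hδ : 0 < δ) :
    ∃ C : ℝ, 0 < C ∧ ∀ u : ℝ, 0 ≤ u →
      ∑' p, Real.log (1 + u / cc s σ p) ≤ δ * u ^ (1 / (2 * s)) + C := by
  have h2s : (0 : ℝ) < 2 * s := by linarith
  set K : ℝ := 4 * s + 4 with hK
  have hK0 : (0 : ℝ) < K := by rw [hK]; linarith
  set A : ℝ := (2 * K / δ) ^ (2 * s) with hA
  have hA0 : 0 < A := Real.rpow_pos_of_pos (by positivity) _
  have hA1 : A ^ (1 / (2 * s)) = 2 * K / δ := by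
    rw [hA, ← Real.rpow_mul (by positivity), mul_one_div, div_self (ne_of_gt h2s),
      Real.rpow_one]
  obtain ⟨M, hM⟩ := Filter.eventually_atTop.mp (hσtop.eventually_ge_atTop A)
  obtain ⟨C2, hC20, hC2⟩ := log_aux hs (a := (M : ℝ)) (b := (σ 1)⁻¹) (η := δ / 2)
    (Nat.cast_nonneg M) (inv_nonneg.mpr (hσpos 1).le) (by positivity)
  refine ⟨K + C2, by positivity, fun u hu => ?_⟩
  have hsum := summable_rlog hs hσpos hσmono hu
  rw [← Summable.sum_add_tsum_nat_add M hsum]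
  have hσ1 := hσpos 1
  have hhead : ∑ p ∈ Finset.range M, Real.log (1 + u / cc s σ p)
      ≤ (M : ℝ) * Real.log (1 + (σ 1)⁻¹ * u) := by
    have hterm : ∀ p ∈ Finset.range M, Real.log (1 + u / cc s σ p)
        ≤ Real.log (1 + (σ 1)⁻¹ * u) := by
      intro p _
      have hccp := cc_pos hσpos (s := s) p
      have h1 : σ 1 ≤ cc s σ p := by
        have hge := cc_ge hs hσpos hσmono p
        have e1 : (1 : ℝ) ≤ ((p : ℝ) + 1) ^ 2 := by
          nlinarith [Nat.cast_nonneg (α := ℝ) p]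
        have e2 := mul_le_mul_of_nonneg_right e1 hσ1.le
        rw [one_mul] at e2
        linarith
      have h2 : u / cc s σ p ≤ u / σ 1 :=
        div_le_div_of_nonneg_left hu hσ1 h1
      have h3 : u / σ 1 = (σ 1)⁻¹ * u := by rw [div_eq_mul_inv]; ring
      have h4 : 0 ≤ u / cc s σ p := div_nonneg hu hccp.le
      refine Real.log_le_log (by linarith) ?_
      rw [← h3]
      linarith
    calc ∑ p ∈ Finset.range M, Real.log (1 + u / cc s σ p)
        ≤ ∑ p ∈ Finset.range M, Real.log (1 + (σ 1)⁻¹ * u) := Finset.sum_le_sum hterm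
      _ = (M : ℝ) * Real.log (1 + (σ 1)⁻¹ * u) := by
          rw [Finset.sum_const, Finset.card_range, nsmul_eq_mul]
  have htail : ∑' p : ℕ, Real.log (1 + u / cc s σ (p + M))
      ≤ K + δ / 2 * u ^ (1 / (2 * s)) := by
    have hterm : ∀ p : ℕ, Real.log (1 + u / cc s σ (p + M))
        ≤ Real.log (1 + (u / A) / ((p : ℝ) + 1) ^ (2 * s)) := by
      intro p
      have hccp := cc_pos hσpos (s := s) (p + M)
      have hb0 : (0 : ℝ) < ((p : ℝ) + 1) ^ (2 * s) := Real.rpow_pos_of_pos (by positivity) _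
      have h1 : ((p : ℝ) + 1) ^ (2 * s) * A ≤ cc s σ (p + M) := by
        have hbase : ((p : ℝ) + 1) ^ (2 * s) ≤ (((p + M : ℕ) : ℝ) + 1) ^ (2 * s) := by
          refine Real.rpow_le_rpow (by positivity) ?_ h2s.le
          push_cast
          linarith [Nat.cast_nonneg (α := ℝ) M]
        have hσA : A ≤ σ (p + M + 1) := hM (p + M + 1) (by omega)
        calc ((p : ℝ) + 1) ^ (2 * s) * A
            ≤ (((p + M : ℕ) : ℝ) + 1) ^ (2 * s) * σ (p + M + 1) :=
              mul_le_mul hbase hσA hA0.le (Real.rpow_nonneg (by positivity) _)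
          _ = cc s σ (p + M) := rfl
      have h2 : u / cc s σ (p + M) ≤ u / (((p : ℝ) + 1) ^ (2 * s) * A) :=
        div_le_div_of_nonneg_left hu (by positivity) h1
      have h3 : u / (((p : ℝ) + 1) ^ (2 * s) * A) = (u / A) / ((p : ℝ) + 1) ^ (2 * s) := by
        rw [div_div]
        ring_nf
      have h4 : 0 ≤ u / cc s σ (p + M) := div_nonneg hu hccp.le
      refine Real.log_le_log (by linarith) ?_
      rw [← h3]
      linarith
    have huA : 0 ≤ u / A := div_nonneg hu hA0.le
    calc ∑' p : ℕ, Real.log (1 + u / cc s σ (p + M))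
        ≤ ∑' p : ℕ, Real.log (1 + (u / A) / ((p : ℝ) + 1) ^ (2 * s)) :=
          Summable.tsum_le_tsum hterm ((summable_nat_add_iff M).mpr hsum) (summable_logT hs huA)
      _ ≤ K * (1 + (u / A) ^ (1 / (2 * s))) := T_bound hs huA
      _ = K + K * (u ^ (1 / (2 * s)) / A ^ (1 / (2 * s))) := by
          rw [Real.div_rpow hu hA0.le]
          ring
      _ = K + δ / 2 * u ^ (1 / (2 * s)) := by
          rw [hA1]
          have : K * (u ^ (1 / (2 * s)) / (2 * K / δ)) = δ / 2 * u ^ (1 / (2 * s)) := by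
            field_simp
          rw [this]
  have h5 := hC2 u hu
  linarith [hhead, htail, h5]

set_option maxHeartbeats 1600000 in
lemma differentiable_g (hs : 1 < s) (hσpos : ∀ p, 0 < σ p) (hσmono : Monotone σ) :
    Differentiable ℂ (fun z : ℂ => ∏' p, (1 - z / (cc s σ p : ℂ))) := by
  intro z₀
  have hR0 : (0 : ℝ) < ‖z₀‖ + 1 := by positivity
  obtain ⟨N, hN⟩ := exists_cc_ge hs hσpos hσmono (2 * (‖z₀‖ + 1) + 1)
  set R : ℝ := ‖z₀‖ + 1 with hRdef
  set t : Set ℂ := Metric.ball (0 : ℂ) R with htdef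
  have hto : IsOpen t := Metric.isOpen_ball
  have htc : IsPreconnected t := (convex_ball (0 : ℂ) R).isPreconnected
  have hz₀t : z₀ ∈ t := by
    simp only [htdef, Metric.mem_ball, dist_zero_right]
    rw [hRdef]
    linarith
  have h1R : 1 ≤ R := by rw [hRdef]; linarith [norm_nonneg z₀]
  have hkey : ∀ (p : ℕ), ∀ z ∈ t, ‖z / (cc s σ (p + N) : ℂ)‖ ≤ 1 / 2 := by
    intro p z hz
    have hc := hN (p + N) (Nat.le_add_left N p)
    have hzR : ‖z‖ < R := by
      simpa [htdef, Metric.mem_ball, dist_zero_right] using hz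
    refine norm_div_le_half ?_
    linarith
  have hslit : ∀ (p : ℕ), ∀ z ∈ t, (1 - z / (cc s σ (p + N) : ℂ)) ∈ Complex.slitPlane := by
    intro p z hz
    rw [Complex.mem_slitPlane_iff]
    left
    have h1 : |(z / (cc s σ (p + N) : ℂ)).re| ≤ ‖z / (cc s σ (p + N) : ℂ)‖ :=
      le_trans (Complex.abs_re_le_norm _) le_rfl
    have h2 := hkey p z hz
    have h3 : ((1 : ℂ) - z / (cc s σ (p + N) : ℂ)).re
        = 1 - (z / (cc s σ (p + N) : ℂ)).re := by
      simp [Complex.sub_re, Complex.one_re]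
    rw [h3]
    have h4 := (abs_le.mp (h1.trans h2)).2
    linarith
  have hlb : ∀ (p : ℕ), ∀ z ∈ t, 1 / 2 ≤ ‖(1 : ℂ) - z / (cc s σ (p + N) : ℂ)‖ := by
    intro p z hz
    have h2 := hkey p z hz
    have h4 : ‖(1 : ℂ)‖ - ‖z / (cc s σ (p + N) : ℂ)‖ ≤ ‖(1 : ℂ) - z / (cc s σ (p + N) : ℂ)‖ :=
      norm_sub_norm_le _ _
    rw [norm_one] at h4
    linarith
  have husum : Summable (fun p : ℕ => 2 * (cc s σ (p + N))⁻¹) :=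
    ((summable_nat_add_iff N).mpr (summable_inv_cc hs hσpos hσmono)).mul_left 2
  have hGd : ∀ (p : ℕ), ∀ z ∈ t,
      HasDerivAt (fun z : ℂ => Complex.log (1 - z / (cc s σ (p + N) : ℂ)))
        (-(1 / ((cc s σ (p + N) : ℝ) : ℂ)) / (1 - z / (cc s σ (p + N) : ℂ))) z := by
    intro p z hz
    have h1 : HasDerivAt (fun z : ℂ => 1 - z / (cc s σ (p + N) : ℂ))
        (-(1 / ((cc s σ (p + N) : ℝ) : ℂ))) z := by
      simpa using ((hasDerivAt_id z).div_const ((cc s σ (p + N) : ℝ) : ℂ)).const_sub 1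
    exact h1.clog (hslit p z hz)
  have hGb : ∀ (p : ℕ), ∀ z ∈ t,
      ‖-(1 / ((cc s σ (p + N) : ℝ) : ℂ)) / (1 - z / (cc s σ (p + N) : ℂ))‖
        ≤ 2 * (cc s σ (p + N))⁻¹ := by
    intro p z hz
    have hlb2 := hlb p z hz
    have hcp := cc_pos hσpos (s := s) (p + N)
    have hnn : (0 : ℝ) < ‖(1 : ℂ) - z / (cc s σ (p + N) : ℂ)‖ :=
      lt_of_lt_of_le one_half_pos hlb2
    have hnum : ‖-(1 / ((cc s σ (p + N) : ℝ) : ℂ))‖ = (cc s σ (p + N))⁻¹ := by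
      rw [norm_neg, norm_div, norm_one, Complex.norm_real, Real.norm_eq_abs,
        abs_of_pos hcp, one_div]
    rw [norm_div, hnum, div_le_iff₀ hnn]
    calc (cc s σ (p + N))⁻¹ = 2 * (cc s σ (p + N))⁻¹ * (1 / 2) := by ring
      _ ≤ 2 * (cc s σ (p + N))⁻¹ * ‖(1 : ℂ) - z / (cc s σ (p + N) : ℂ)‖ := by
          refine mul_le_mul_of_nonneg_left hlb2 ?_
          positivity
  have hsum0 : Summable (fun p : ℕ => Complex.log (1 - z₀ / (cc s σ (p + N) : ℂ))) :=
    (summable_nat_add_iff N).mpr (summable_clog hs hσpos hσmono z₀)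
  have hψ : ∀ y ∈ t,
      HasDerivAt (fun z : ℂ => ∑' p : ℕ, Complex.log (1 - z / (cc s σ (p + N) : ℂ)))
        (∑' p : ℕ, -(1 / ((cc s σ (p + N) : ℝ) : ℂ)) / (1 - y / (cc s σ (p + N) : ℂ))) y :=
    fun y hy => hasDerivAt_tsum_of_isPreconnected husum hto htc hGd hGb hz₀t hsum0 hy
  have hFd : ∀ (F : Finset ℕ),
      Differentiable ℂ (fun z : ℂ => ∏ p ∈ F, (1 - z / (cc s σ p : ℂ))) := by
    intro F
    induction F using Finset.induction_on with
    | empty => simpa using differentiable_const (1 : ℂ)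
    | insert _ _ hnot ih =>
        simp only [Finset.prod_insert hnot]
        exact ((differentiable_id.div_const _).const_sub 1).mul ih
  have hhd : DifferentiableAt ℂ (fun z : ℂ =>
      (∏ p ∈ Finset.range N, (1 - z / (cc s σ p : ℂ))) *
        Complex.exp (∑' p : ℕ, Complex.log (1 - z / (cc s σ (p + N) : ℂ)))) z₀ := by
    refine DifferentiableAt.mul ((hFd (Finset.range N)) z₀) ?_
    exact ((hψ z₀ hz₀t).differentiableAt).cexp
  refine hhd.congr_of_eventuallyEq ?_
  refine Filter.eventuallyEq_of_mem (hto.mem_nhds hz₀t) (fun z hz => ?_)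
  have hne : ∀ p : ℕ, (1 : ℂ) - z / (cc s σ (p + N) : ℂ) ≠ 0 :=
    fun p => Complex.slitPlane_ne_zero (hslit p z hz)
  have hlogz : Summable (fun p : ℕ => Complex.log (1 - z / (cc s σ (p + N) : ℂ))) :=
    (summable_nat_add_iff N).mpr (summable_clog hs hσpos hσmono z)
  have hhp : HasProd (fun p : ℕ => 1 - z / (cc s σ (p + N) : ℂ))
      (Complex.exp (∑' p : ℕ, Complex.log (1 - z / (cc s σ (p + N) : ℂ)))) := by
    have h1 := hlogz.hasSum.cexp
    have h2 : (Complex.exp ∘ fun p : ℕ => Complex.log (1 - z / (cc s σ (p + N) : ℂ)))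
        = fun p : ℕ => 1 - z / (cc s σ (p + N) : ℂ) :=
      funext fun p => Complex.exp_log (hne p)
    rwa [h2] at h1
  have hsplit := Multipliable.prod_mul_tprod_nat_mul'
    (f := fun p : ℕ => 1 - z / (cc s σ p : ℂ)) (k := N) hhp.multipliable
  rw [← hsplit, hhp.tprod_eq]

end QsymbolAux

/-- If `σ` is positive, nondecreasing and tends to `∞`, then the infinite product
`Q(ζ) = ∏_{p=1}^∞ (1 − ⟨ζ⟩²/(p^{2s} σ(p)))` converges for every `ζ ∈ ℂ^m`, defines
an entire function on `ℂ^m`, and for every `δ > 0` there is `C_δ > 0` with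
`|Q(ζ)| ≤ C_δ exp(δ‖ζ‖^{1/s})`, i.e. `Q` is the symbol of an ultradifferential
operator of type `{p!^s}`. -/
theorem qsymbol_entire_and_bound (m : ℕ) (hm : 1 ≤ m) (s : ℝ) (hs : 1 < s)
    (σ : ℕ → ℝ) (hσpos : ∀ p, 0 < σ p) (hσmono : Monotone σ)
    (hσtop : Filter.Tendsto σ Filter.atTop Filter.atTop) :
    (∀ ζ : EuclideanSpace ℂ (Fin m),
        Multipliable (fun p : ℕ =>
          1 - (∑ i, ζ i ^ 2) / (((((p : ℝ) + 1) ^ (2 * s) * σ (p + 1)) : ℝ) : ℂ)))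
    ∧ (∀ ζ : EuclideanSpace ℂ (Fin m), AnalyticAt ℂ (Qsymbol m s σ) ζ)
    ∧ (∀ δ : ℝ, 0 < δ → ∃ C : ℝ, 0 < C ∧ ∀ ζ : EuclideanSpace ℂ (Fin m),
        ‖Qsymbol m s σ ζ‖ ≤ C * Real.exp (δ * ‖ζ‖ ^ (1 / s))) := by
  have hq : ∀ ζ : EuclideanSpace ℂ (Fin m),
      AnalyticAt ℂ (fun ζ : EuclideanSpace ℂ (Fin m) => ∑ i, ζ i ^ 2) ζ := by
    intro ζ
    refine Finset.analyticAt_fun_sum _ (fun i _ => ?_)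
    exact ((EuclideanSpace.proj (𝕜 := ℂ) i).analyticAt ζ).pow 2
  refine ⟨fun ζ => QsymbolAux.multipliable_aux hs hσpos hσmono _, fun ζ => ?_, fun δ hδ => ?_⟩
  · have hg := (QsymbolAux.differentiable_g hs hσpos hσmono).analyticAt (∑ i, ζ i ^ 2)
    exact AnalyticAt.comp
      (g := fun z : ℂ => ∏' p, (1 - z / (QsymbolAux.cc s σ p : ℂ)))
      (f := fun ζ : EuclideanSpace ℂ (Fin m) => ∑ i, ζ i ^ 2) hg (hq ζ)
  · obtain ⟨C0, hC00, hC0⟩ := QsymbolAux.S_bound hs hσpos hσmono hσtop hδ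
    refine ⟨Real.exp C0, Real.exp_pos _, fun ζ => ?_⟩
    have hz2 : ‖∑ i, ζ i ^ 2‖ ≤ ‖ζ‖ ^ 2 := by
      calc ‖∑ i, ζ i ^ 2‖ ≤ ∑ i, ‖ζ i ^ 2‖ := norm_sum_le _ _
        _ = ∑ i, ‖ζ i‖ ^ 2 := by simp [norm_pow]
        _ = ‖ζ‖ ^ 2 := by
            rw [EuclideanSpace.norm_eq, Real.sq_sqrt]
            positivity
    have h3 : ‖∑ i, ζ i ^ 2‖ ^ (1 / (2 * s)) ≤ ‖ζ‖ ^ (1 / s) := by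
      have h4 : ‖∑ i, ζ i ^ 2‖ ^ (1 / (2 * s)) ≤ (‖ζ‖ ^ 2) ^ (1 / (2 * s)) :=
        Real.rpow_le_rpow (norm_nonneg _) hz2 (by positivity)
      have h5 : (‖ζ‖ ^ 2) ^ (1 / (2 * s)) = ‖ζ‖ ^ (1 / s) := by
        rw [← Real.rpow_natCast ‖ζ‖ 2, ← Real.rpow_mul (norm_nonneg _)]
        congr 1
        push_cast
        field_simp
      rw [h5] at h4
      exact h4
    have h1 : ‖Qsymbol m s σ ζ‖
        ≤ Real.exp (∑' p, Real.log (1 + ‖∑ i, ζ i ^ 2‖ / QsymbolAux.cc s σ p)) :=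
      QsymbolAux.norm_tprod_le hs hσpos hσmono (∑ i, ζ i ^ 2)
    have h2 := hC0 ‖∑ i, ζ i ^ 2‖ (norm_nonneg _)
    have h6 : δ * ‖∑ i, ζ i ^ 2‖ ^ (1 / (2 * s)) ≤ δ * ‖ζ‖ ^ (1 / s) :=
      mul_le_mul_of_nonneg_left h3 hδ.le
    calc ‖Qsymbol m s σ ζ‖
        ≤ Real.exp (∑' p, Real.log (1 + ‖∑ i, ζ i ^ 2‖ / QsymbolAux.cc s σ p)) := h1
      _ ≤ Real.exp (δ * ‖∑ i, ζ i ^ 2‖ ^ (1 / (2 * s)) + C0) := Real.exp_le_exp.mpr h2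
      _ ≤ Real.exp (δ * ‖ζ‖ ^ (1 / s) + C0) := Real.exp_le_exp.mpr (by linarith)
      _ = Real.exp C0 * Real.exp (δ * ‖ζ‖ ^ (1 / s)) := by
          rw [← Real.exp_add, add_comm]
end

section
/- Let m ≥ 1 be an integer, let s > 1 be a real number, and let σ : ℝ → ℝ be positive and nondecreasing on [0, ∞). Let ξ ∈ ℝ^m and let q ∈ ℕ be such that q^{2s} σ(q) ≤ ‖ξ‖² ≤ (q+1)^{2s} σ(q+1) and σ(q) ≥ 1. Then ∏_{p=1}^∞ (1 + ‖ξ‖²/(p^{2s} σ(p))) ≥ 2^q ≥ (1/2) · exp( (log 2) · ‖ξ‖^{1/s} / σ(‖ξ‖^{1/s} + 1) ). -/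
open scoped BigOperators

/-- Lower bound for the product `∏_{p=1}^∞ (1 + ‖ξ‖²/(p^{2s} σ(p)))`: if `q` is a
natural number with `q^{2s} σ(q) ≤ ‖ξ‖² ≤ (q+1)^{2s} σ(q+1)` and `σ(q) ≥ 1`, then
the product is at least `2^q`, which itself is at least
`(1/2) exp((log 2) ‖ξ‖^{1/s} / σ(‖ξ‖^{1/s} + 1))`. -/
theorem prod_lower_bound (m : ℕ) (hm : 1 ≤ m) (s : ℝ) (hs : 1 < s)
    (σ : ℝ → ℝ) (hσpos : ∀ x : ℝ, 0 ≤ x → 0 < σ x) (hσmono : MonotoneOn σ (Set.Ici 0))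
    (ξ : EuclideanSpace ℝ (Fin m)) (q : ℕ)
    (hq1 : ((q : ℝ)) ^ (2 * s) * σ (q : ℝ) ≤ ‖ξ‖ ^ 2)
    (hq2 : ‖ξ‖ ^ 2 ≤ ((q : ℝ) + 1) ^ (2 * s) * σ ((q : ℝ) + 1))
    (hσq : 1 ≤ σ (q : ℝ)) :
    (2 : ℝ) ^ q ≤ ∏' p : ℕ, (1 + ‖ξ‖ ^ 2 / (((p : ℝ) + 1) ^ (2 * s) * σ ((p : ℝ) + 1)))
    ∧ (1 / 2) * Real.exp (Real.log 2 * (‖ξ‖ ^ (1 / s) / σ (‖ξ‖ ^ (1 / s) + 1)))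
        ≤ (2 : ℝ) ^ q := by
  have hs0 : (0 : ℝ) < s := by linarith
  have h2s : (0 : ℝ) < 2 * s := by linarith
  set N : ℝ := ‖ξ‖ with hN
  have hN0 : 0 ≤ N := norm_nonneg _
  set D : ℕ → ℝ := fun p => ((p : ℝ) + 1) ^ (2 * s) * σ ((p : ℝ) + 1) with hD
  have hDpos : ∀ p : ℕ, 0 < D p := by
    intro p
    have hp1 : (0:ℝ) < (p : ℝ) + 1 := by positivity
    exact mul_pos (Real.rpow_pos_of_pos hp1 _) (hσpos _ hp1.le)
  have ha0 : ∀ p : ℕ, 0 ≤ N ^ 2 / D p := fun p => div_nonneg (sq_nonneg N) (hDpos p).le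
  -- summability of the terms
  have hσ1 : ∀ p : ℕ, σ 1 ≤ σ ((p : ℝ) + 1) := by
    intro p
    exact hσmono (Set.mem_Ici.mpr zero_le_one) (Set.mem_Ici.mpr (by positivity))
      (le_add_of_nonneg_left (Nat.cast_nonneg p))
  have hsum : Summable (fun p : ℕ => N ^ 2 / D p) := by
    have hbase : Summable (fun p : ℕ => 1 / ((p : ℝ)) ^ (2 * s)) :=
      Real.summable_one_div_nat_rpow.mpr (by linarith)
    have hshift : Summable (fun p : ℕ => 1 / ((p : ℝ) + 1) ^ (2 * s)) := by
      have := (summable_nat_add_iff 1).mpr hbase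
      refine this.congr fun p => by push_cast; ring_nf
    have : Summable (fun p : ℕ => (N ^ 2 / σ 1) * (1 / ((p : ℝ) + 1) ^ (2 * s))) :=
      hshift.mul_left _
    refine Summable.of_nonneg_of_le ha0 (fun p => ?_) this
    have hσ1pos : 0 < σ 1 := hσpos 1 zero_le_one
    have hrp : (0:ℝ) < ((p : ℝ) + 1) ^ (2 * s) := Real.rpow_pos_of_pos (by positivity) _
    rw [mul_one_div, div_div]
    rw [div_le_div_iff₀ (hDpos p) (by positivity)]
    have hDp : D p = ((p : ℝ) + 1) ^ (2 * s) * σ ((p : ℝ) + 1) := rfl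
    rw [hDp]
    nlinarith [mul_nonneg (mul_nonneg (sq_nonneg N) hrp.le) (sub_nonneg.mpr (hσ1 p))]
  have hlog : Summable (fun p : ℕ => Real.log (1 + N ^ 2 / D p)) := by
    refine Summable.of_nonneg_of_le (fun p => Real.log_nonneg (by linarith [ha0 p]))
      (fun p => ?_) hsum
    have := Real.log_le_sub_one_of_pos (x := 1 + N ^ 2 / D p) (by linarith [ha0 p])
    linarith
  have hmult : Multipliable (fun p : ℕ => 1 + N ^ 2 / D p) := by
    have := Real.multipliable_of_summable_log (f := fun p => 1 + N ^ 2 / D p)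
      (fun p => by linarith [ha0 p]) hlog
    exact this
  -- each factor is at least 1
  have hone : ∀ p : ℕ, 1 ≤ 1 + N ^ 2 / D p := fun p => by linarith [ha0 p]
  -- factors with p < q are at least 2
  have htwo : ∀ p : ℕ, p < q → 2 ≤ 1 + N ^ 2 / D p := by
    intro p hp
    have hpq : (p : ℝ) + 1 ≤ (q : ℝ) := by exact_mod_cast Nat.succ_le_of_lt hp
    have hDle : D p ≤ (q : ℝ) ^ (2 * s) * σ (q : ℝ) := by
      refine mul_le_mul (Real.rpow_le_rpow (by positivity) hpq h2s.le)
        (hσmono (Set.mem_Ici.mpr (by positivity)) (Set.mem_Ici.mpr (by positivity)) hpq)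
        (hσpos _ (by positivity)).le ?_
      positivity
    have h1 : 1 ≤ N ^ 2 / D p := by
      rw [le_div_iff₀ (hDpos p), one_mul]
      exact le_trans hDle hq1
    linarith
  constructor
  · have htp : (∏' p : ℕ, (1 + N ^ 2 / D p))
        = Real.exp (∑' p : ℕ, Real.log (1 + N ^ 2 / D p)) := by
      have h := Real.rexp_tsum_eq_tprod (f := fun p => 1 + N ^ 2 / D p)
        (fun p => by linarith [ha0 p]) hlog
      exact h.symm
    have hsum_ge : (q : ℝ) * Real.log 2 ≤ ∑' p : ℕ, Real.log (1 + N ^ 2 / D p) := by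
      calc (q : ℝ) * Real.log 2 = ∑ _p ∈ Finset.range q, Real.log 2 := by
            rw [Finset.sum_const, Finset.card_range, nsmul_eq_mul]
        _ ≤ ∑ p ∈ Finset.range q, Real.log (1 + N ^ 2 / D p) := by
            refine Finset.sum_le_sum fun p hp => ?_
            exact Real.log_le_log (by norm_num) (htwo p (Finset.mem_range.mp hp))
        _ ≤ ∑' p : ℕ, Real.log (1 + N ^ 2 / D p) :=
            Summable.sum_le_tsum _ (fun p _ => Real.log_nonneg (hone p)) hlog
    rw [htp]
    calc (2 : ℝ) ^ q = Real.exp ((q : ℝ) * Real.log 2) := by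
          rw [Real.exp_nat_mul, Real.exp_log (by norm_num)]
      _ ≤ Real.exp (∑' p : ℕ, Real.log (1 + N ^ 2 / D p)) := Real.exp_le_exp.mpr hsum_ge
  · -- second inequality
    set t : ℝ := N ^ (1 / s) with ht
    have ht0 : 0 ≤ t := Real.rpow_nonneg hN0 _
    -- q ≤ t
    have hq_le_t : (q : ℝ) ≤ t := by
      have h1 : ((q : ℝ)) ^ (2 * s) ≤ N ^ 2 := by
        nlinarith [Real.rpow_nonneg (Nat.cast_nonneg q : (0:ℝ) ≤ q) (2 * s)]
      have h2 : (((q : ℝ)) ^ (2 * s)) ^ (1 / (2 * s)) ≤ (N ^ 2) ^ (1 / (2 * s)) :=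
        Real.rpow_le_rpow (Real.rpow_nonneg (Nat.cast_nonneg q) _) h1 (by positivity)
      rwa [← Real.rpow_mul (Nat.cast_nonneg q), mul_one_div_cancel h2s.ne',
        Real.rpow_one, ← Real.rpow_two, ← Real.rpow_mul hN0,
        (show (2 : ℝ) * (1 / (2 * s)) = 1 / s by field_simp)] at h2
    have hσt1 : σ ((q : ℝ) + 1) ≤ σ (t + 1) := by
      exact hσmono (Set.mem_Ici.mpr (by positivity)) (Set.mem_Ici.mpr (by positivity))
        (by linarith)
    have hσt1_ge : 1 ≤ σ (t + 1) := by
      calc (1:ℝ) ≤ σ (q : ℝ) := hσq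
        _ ≤ σ (t + 1) := hσmono (Set.mem_Ici.mpr (Nat.cast_nonneg q))
              (Set.mem_Ici.mpr (by positivity)) (by linarith)
    have hσt1_pos : 0 < σ (t + 1) := by linarith
    -- t ≤ (q+1) σ(t+1)
    have hkey : t ≤ ((q : ℝ) + 1) * σ (t + 1) := by
      have h1 : t ^ (2 * s) = N ^ 2 := by
        rw [ht, ← Real.rpow_mul hN0, (show 1 / s * (2 * s) = 2 by field_simp),
          Real.rpow_two]
      have h2 : σ (t + 1) ≤ σ (t + 1) ^ (2 * s) := by
        nth_rewrite 1 [← Real.rpow_one (σ (t + 1))]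
        exact Real.rpow_le_rpow_of_exponent_le hσt1_ge (by linarith)
      have h3 : t ^ (2 * s) ≤ (((q : ℝ) + 1) * σ (t + 1)) ^ (2 * s) := by
        rw [Real.mul_rpow (by positivity) hσt1_pos.le, h1]
        calc N ^ 2 ≤ ((q : ℝ) + 1) ^ (2 * s) * σ ((q : ℝ) + 1) := hq2
          _ ≤ ((q : ℝ) + 1) ^ (2 * s) * σ (t + 1) := by
              have : (0:ℝ) < ((q : ℝ) + 1) ^ (2 * s) := Real.rpow_pos_of_pos (by positivity) _
              nlinarith
          _ ≤ ((q : ℝ) + 1) ^ (2 * s) * σ (t + 1) ^ (2 * s) := by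
              have : (0:ℝ) < ((q : ℝ) + 1) ^ (2 * s) := Real.rpow_pos_of_pos (by positivity) _
              nlinarith
      exact (Real.rpow_le_rpow_iff ht0 (by positivity) h2s).mp h3
    have hX : t / σ (t + 1) ≤ (q : ℝ) + 1 := by
      rw [div_le_iff₀ hσt1_pos]
      linarith
    have hlog2 : (0:ℝ) < Real.log 2 := Real.log_pos (by norm_num)
    have hexp : Real.exp (Real.log 2 * (t / σ (t + 1))) ≤ (2:ℝ) ^ (q + 1) := by
      calc Real.exp (Real.log 2 * (t / σ (t + 1)))
          ≤ Real.exp (Real.log 2 * ((q : ℝ) + 1)) :=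
            Real.exp_le_exp.mpr (by nlinarith)
        _ = (2:ℝ) ^ (q + 1) := by
            rw [mul_comm, (show (q : ℝ) + 1 = ((q + 1 : ℕ) : ℝ) by push_cast; ring),
              Real.exp_nat_mul, Real.exp_log (by norm_num)]
    calc (1 / 2 : ℝ) * Real.exp (Real.log 2 * (t / σ (t + 1)))
        ≤ (1 / 2 : ℝ) * (2:ℝ) ^ (q + 1) := by linarith
      _ = (2:ℝ) ^ q := by rw [pow_succ]; ring
end

section
/- Let m ≥ 1 be an integer and s ≥ 1 a real number. Let Q(ζ) = Σ_α a_α ζ^α be a power series in m complex variables (α ranging over multi-indices in ℕ^m) converging on all of ℂ^m. Then the following are equivalent: (i) for every ε > 0 there exists C_ε > 0 such that |a_α| ≤ C_ε · ε^{|α|} / (|α|!)^s for every multi-index α; (ii) for every δ > 0 there exists C_δ > 0 such that |Q(ζ)| ≤ C_δ · exp(δ ‖ζ‖^{1/s}) for all ζ ∈ ℂ^m. -/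
open scoped BigOperators
open MeasureTheory Real Set
open scoped ENNReal NNReal

lemma exp_rpow_aux (v s : ℝ) (hv : 0 ≤ v) (hs : 1 ≤ s) :
    Summable (fun k : ℕ => (v ^ k / (Nat.factorial k : ℝ)) ^ s) ∧
    ∑' k : ℕ, (v ^ k / (Nat.factorial k : ℝ)) ^ s ≤ Real.exp (s * v) := by
  have hs0 : s ≠ 0 := by linarith
  set x : ℕ → ℝ := fun k => v ^ k / (Nat.factorial k : ℝ) with hx
  have hx0 : ∀ k, 0 ≤ x k := fun k => by positivity
  have hsum : Summable x := Real.summable_pow_div_factorial v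
  have htsum : ∑' k, x k = Real.exp v := by
    rw [Real.exp_eq_exp_ℝ, NormedSpace.exp_eq_tsum_div]
  have hxle : ∀ k, x k ≤ Real.exp v := by
    intro k
    rw [← htsum]
    exact Summable.le_tsum hsum k (fun j _ => hx0 j)
  have hbound : ∀ k, (x k) ^ s ≤ Real.exp v ^ (s - 1) * x k := by
    intro k
    rcases eq_or_lt_of_le (hx0 k) with h | h
    · rw [← h, Real.zero_rpow hs0, mul_zero]
    · have h2 : (x k) ^ s = (x k) ^ (s - 1) * x k := by
        nth_rewrite 3 [← Real.rpow_one (x k)]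
        rw [← Real.rpow_add h]
        ring_nf
      rw [h2]
      have := Real.rpow_le_rpow (hx0 k) (hxle k) (by linarith : 0 ≤ s - 1)
      exact mul_le_mul_of_nonneg_right this (hx0 k)
  have hsum2 : Summable (fun k => (x k) ^ s) :=
    Summable.of_nonneg_of_le (fun k => Real.rpow_nonneg (hx0 k) s) hbound (hsum.mul_left _)
  refine ⟨hsum2, ?_⟩
  calc ∑' k, (x k) ^ s ≤ ∑' k, Real.exp v ^ (s - 1) * x k :=
        Summable.tsum_le_tsum hbound hsum2 (hsum.mul_left _)
    _ = Real.exp v ^ (s - 1) * ∑' k, x k := tsum_mul_left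
    _ = Real.exp v ^ (s - 1) * Real.exp v ^ (1 : ℝ) := by rw [htsum, Real.rpow_one]
    _ = Real.exp v ^ s := by
        rw [← Real.rpow_add (Real.exp_pos v)]; ring_nf
    _ = Real.exp (s * v) := by
        rw [← Real.exp_mul, mul_comm]

lemma prod_summable_aux (m : ℕ) (f : ℕ → ℝ) (h0 : ∀ k, 0 ≤ f k) (hf : Summable f) :
    Summable (fun α : Fin m → ℕ => ∏ i, f (α i)) ∧
    (∑' α : Fin m → ℕ, ∏ i, f (α i)) = (∑' k, f k) ^ m := by
  induction m with
  | zero =>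
      haveI : Unique (Fin 0 → ℕ) := ⟨⟨fun i => i.elim0⟩, fun g => funext fun i => i.elim0⟩
      constructor
      · exact Summable.of_finite
      · rw [tsum_eq_single (default : Fin 0 → ℕ) (fun b hb => absurd (Subsingleton.elim b default) hb)]
        simp
  | succ n ih =>
      obtain ⟨ihs, iht⟩ := ih
      set g : ℕ × (Fin n → ℕ) → ℝ := fun p => f p.1 * ∏ i, f (p.2 i) with hg
      have hgs : Summable g :=
        Summable.mul_of_nonneg (g := fun β : Fin n → ℕ => ∏ i, f (β i)) hf ihs (fun k => h0 k) (fun β => Finset.prod_nonneg fun i _ => h0 _)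
      set e : (ℕ × (Fin n → ℕ)) ≃ (Fin (n + 1) → ℕ) := Fin.consEquiv (fun _ => ℕ) with he
      have hkey : ∀ α : Fin (n + 1) → ℕ, (∏ i, f (α i)) = g (e.symm α) := by
        intro α
        rw [Fin.prod_univ_succ]
        rfl
      have hs1 : Summable (fun α : Fin (n + 1) → ℕ => ∏ i, f (α i)) := by
        have := hgs.comp_injective e.symm.injective
        refine this.congr fun α => ?_
        exact (hkey α).symm
      refine ⟨hs1, ?_⟩
      have h1 : (∑' α : Fin (n + 1) → ℕ, ∏ i, f (α i)) = ∑' p : ℕ × (Fin n → ℕ), g p := by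
        rw [← e.symm.tsum_eq (f := g)]
        exact tsum_congr hkey
      rw [h1]
      have hnorm : Summable (fun k => ‖f k‖) := by
        simpa [Real.norm_eq_abs, abs_of_nonneg (h0 _)] using hf
      have hnorm2 : Summable (fun β : Fin n → ℕ => ‖∏ i, f (β i)‖) := by
        refine ihs.congr fun β => ?_
        rw [Real.norm_eq_abs, abs_of_nonneg (Finset.prod_nonneg fun i _ => h0 _)]
      rw [← tsum_mul_tsum_of_summable_norm hnorm hnorm2, iht, pow_succ']

lemma coeff_summable_aux (m : ℕ) (a : (Fin m → ℕ) → ℂ)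
    (hconv : ∀ ζ : EuclideanSpace ℂ (Fin m),
      Summable (fun α : Fin m → ℕ => a α * ∏ i, ζ i ^ α i))
    (r : ℝ) (hr : 0 ≤ r) :
    Summable (fun β : Fin m → ℕ => ‖a β‖ * r ^ (∑ i, β i)) := by
  set ζ : EuclideanSpace ℂ (Fin m) := WithLp.toLp 2 (fun _ => ((2 * r : ℝ) : ℂ)) with hζ
  have hsum := (hconv ζ).norm
  have hnorm : ∀ β : Fin m → ℕ, ‖a β * ∏ i, ζ i ^ β i‖ = ‖a β‖ * (2 * r) ^ (∑ i, β i) := by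
    intro β
    rw [norm_mul, norm_prod]
    congr 1
    have : ∀ i : Fin m, ‖ζ i ^ β i‖ = (2 * r) ^ β i := by
      intro i
      rw [norm_pow]
      congr 1
      simpa [hζ] using abs_of_nonneg (by linarith : (0:ℝ) ≤ 2 * r)
    rw [Finset.prod_congr rfl (fun i _ => this i), Finset.prod_pow_eq_pow_sum]
  set M : ℝ := ∑' β : Fin m → ℕ, ‖a β * ∏ i, ζ i ^ β i‖ with hM
  have hle : ∀ β : Fin m → ℕ, ‖a β‖ * (2 * r) ^ (∑ i, β i) ≤ M := by
    intro β
    rw [← hnorm β]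
    exact Summable.le_tsum hsum β (fun j _ => norm_nonneg _)
  have hgeo : Summable (fun β : Fin m → ℕ => ∏ i, ((2:ℝ)⁻¹) ^ β i) :=
    (prod_summable_aux m (fun k => (2:ℝ)⁻¹ ^ k) (fun k => by positivity)
      (summable_geometric_of_lt_one (by norm_num) (by norm_num))).1
  refine Summable.of_nonneg_of_le (fun β => by positivity) (fun β => ?_)
    ((hgeo.mul_left M))
  have key : ‖a β‖ * r ^ (∑ i, β i) ≤ (‖a β‖ * (2 * r) ^ (∑ i, β i)) * (2:ℝ)⁻¹ ^ (∑ i, β i) := by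
    rw [mul_assoc, ← mul_pow]
    have : (2 * r) * (2:ℝ)⁻¹ = r := by ring
    rw [this]
  calc ‖a β‖ * r ^ (∑ i, β i)
      ≤ (‖a β‖ * (2 * r) ^ (∑ i, β i)) * (2:ℝ)⁻¹ ^ (∑ i, β i) := key
    _ ≤ M * (2:ℝ)⁻¹ ^ (∑ i, β i) := by
        have h2 : (0:ℝ) ≤ (2:ℝ)⁻¹ ^ (∑ i, β i) := by positivity
        exact mul_le_mul_of_nonneg_right (hle β) h2
    _ = M * ∏ i, ((2:ℝ)⁻¹) ^ β i := by rw [Finset.prod_pow_eq_pow_sum]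

lemma coord_le_norm {m : ℕ} (ζ : EuclideanSpace ℂ (Fin m)) (i : Fin m) : ‖ζ i‖ ≤ ‖ζ‖ := by
  rw [EuclideanSpace.norm_eq]
  have h1 : ‖ζ i‖ ^ 2 ≤ ∑ j, ‖ζ j‖ ^ 2 :=
    Finset.single_le_sum (f := fun j => ‖ζ j‖ ^ 2) (fun j _ => sq_nonneg _) (Finset.mem_univ i)
  calc ‖ζ i‖ = Real.sqrt (‖ζ i‖ ^ 2) := (Real.sqrt_sq (norm_nonneg _)).symm
    _ ≤ Real.sqrt (∑ j, ‖ζ j‖ ^ 2) := Real.sqrt_le_sqrt h1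

lemma forward_dir (m : ℕ) (hm : 1 ≤ m) (s : ℝ) (hs : 1 ≤ s)
    (a : (Fin m → ℕ) → ℂ)
    (hconv : ∀ ζ : EuclideanSpace ℂ (Fin m),
      Summable (fun α : Fin m → ℕ => a α * ∏ i, ζ i ^ α i))
    (hi : ∀ ε : ℝ, 0 < ε → ∃ C : ℝ, 0 < C ∧ ∀ α : Fin m → ℕ,
        ‖a α‖ ≤ C * ε ^ (∑ i, α i) / ((Nat.factorial (∑ i, α i) : ℝ)) ^ s) :
    ∀ δ : ℝ, 0 < δ → ∃ C : ℝ, 0 < C ∧ ∀ ζ : EuclideanSpace ℂ (Fin m),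
        ‖∑' α : Fin m → ℕ, a α * ∏ i, ζ i ^ α i‖ ≤ C * Real.exp (δ * ‖ζ‖ ^ (1 / s)) := by
  intro δ hδ
  have hs0 : s ≠ 0 := by linarith
  have hm0 : (0:ℝ) < m := by exact_mod_cast hm
  have hms : (0:ℝ) < m * s := by positivity
  set ε : ℝ := (δ / (m * s)) ^ s with hε
  have hε0 : 0 < ε := Real.rpow_pos_of_pos (by positivity) s
  obtain ⟨C, hC0, hC⟩ := hi ε hε0
  refine ⟨C, hC0, fun ζ => ?_⟩
  set t : ℝ := ‖ζ‖ with htdef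
  have ht : 0 ≤ t := norm_nonneg _
  set v : ℝ := (ε * t) ^ (1 / s) with hv
  have hv0 : 0 ≤ v := Real.rpow_nonneg (by positivity) _
  have hvs : v ^ s = ε * t := by
    rw [hv, one_div, Real.rpow_inv_rpow (by positivity) hs0]
  -- the one-variable series
  set h : ℕ → ℝ := fun k => (v ^ k / (Nat.factorial k : ℝ)) ^ s with hh
  obtain ⟨hhs, hht⟩ := exp_rpow_aux v s hv0 hs
  have hh0 : ∀ k, 0 ≤ h k := fun k => Real.rpow_nonneg (by positivity) _
  obtain ⟨hps, hpt⟩ := prod_summable_aux m h hh0 hhs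
  -- pointwise bound
  have hpoint : ∀ β : Fin m → ℕ,
      ‖a β * ∏ i, ζ i ^ β i‖ ≤ C * ∏ i, h (β i) := by
    intro β
    set n : ℕ := ∑ i, β i with hn
    have hfact_prod : (∏ i, ((Nat.factorial (β i) : ℝ))) ≤ (Nat.factorial n : ℝ) := by
      have := Nat.le_of_dvd (Nat.factorial_pos n)
        (Nat.prod_factorial_dvd_factorial_sum Finset.univ β)
      exact_mod_cast this
    have step1 : ‖a β * ∏ i, ζ i ^ β i‖ ≤ C * (ε * t) ^ n / (Nat.factorial n : ℝ) ^ s := by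
      rw [norm_mul, norm_prod]
      have h2 : ∏ i, ‖ζ i ^ β i‖ ≤ t ^ n := by
        rw [← Finset.prod_pow_eq_pow_sum]
        refine Finset.prod_le_prod (fun i _ => norm_nonneg _) (fun i _ => ?_)
        rw [norm_pow]
        exact pow_le_pow_left₀ (norm_nonneg _) (coord_le_norm ζ i) _
      calc ‖a β‖ * ∏ i, ‖ζ i ^ β i‖
          ≤ (C * ε ^ n / (Nat.factorial n : ℝ) ^ s) * t ^ n := by
            refine mul_le_mul (hC β) h2 (Finset.prod_nonneg fun i _ => norm_nonneg _) ?_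
            positivity
        _ = C * (ε * t) ^ n / (Nat.factorial n : ℝ) ^ s := by
            rw [mul_pow]; ring
    have step2 : C * (ε * t) ^ n / (Nat.factorial n : ℝ) ^ s ≤ C * ∏ i, h (β i) := by
      have hcomm : ∀ k : ℕ, (v ^ k) ^ s = (v ^ s) ^ k := by
        intro k
        rw [← Real.rpow_natCast v k, ← Real.rpow_mul hv0, mul_comm,
          Real.rpow_mul hv0, Real.rpow_natCast]
      have hfac : ∀ i : Fin m, h (β i)
          = (ε * t) ^ β i / ((Nat.factorial (β i) : ℝ)) ^ s := by
        intro i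
        have hbeta : h (β i) = (v ^ (β i) / (Nat.factorial (β i) : ℝ)) ^ s := rfl
        rw [hbeta, Real.div_rpow (by positivity) (by positivity), hcomm, hvs]
      have hexp : ∏ i, h (β i)
          = (ε * t) ^ n / (∏ i, ((Nat.factorial (β i) : ℝ))) ^ s := by
        rw [Finset.prod_congr rfl (fun i _ => hfac i), Finset.prod_div_distrib,
          Finset.prod_pow_eq_pow_sum,
          ← Real.finset_prod_rpow Finset.univ _ (fun i _ => by positivity) s]
      rw [hexp]
      have hprodpos : (0:ℝ) < ∏ i, ((Nat.factorial (β i) : ℝ)) :=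
        Finset.prod_pos fun i _ => by exact_mod_cast Nat.factorial_pos _
      have hnum : (0:ℝ) ≤ C * (ε * t) ^ n := by positivity
      have hle : (∏ i, ((Nat.factorial (β i) : ℝ))) ^ s ≤ (Nat.factorial n : ℝ) ^ s :=
        Real.rpow_le_rpow (le_of_lt hprodpos) hfact_prod (by linarith)
      calc C * (ε * t) ^ n / (Nat.factorial n : ℝ) ^ s
          ≤ C * (ε * t) ^ n / (∏ i, ((Nat.factorial (β i) : ℝ))) ^ s :=
            div_le_div_of_nonneg_left hnum (Real.rpow_pos_of_pos hprodpos s) hle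
        _ = C * ((ε * t) ^ n / (∏ i, ((Nat.factorial (β i) : ℝ))) ^ s) := by ring
    exact le_trans step1 step2
  -- sum up
  have hsummaj : Summable (fun β : Fin m → ℕ => C * ∏ i, h (β i)) := hps.mul_left C
  have hnorm : Summable (fun β : Fin m → ℕ => ‖a β * ∏ i, ζ i ^ β i‖) := (hconv ζ).norm
  calc ‖∑' β : Fin m → ℕ, a β * ∏ i, ζ i ^ β i‖
      ≤ ∑' β : Fin m → ℕ, ‖a β * ∏ i, ζ i ^ β i‖ := norm_tsum_le_tsum_norm hnorm
    _ ≤ ∑' β : Fin m → ℕ, C * ∏ i, h (β i) := Summable.tsum_le_tsum hpoint hnorm hsummaj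
    _ = C * (∑' k, h k) ^ m := by rw [tsum_mul_left, hpt]
    _ ≤ C * (Real.exp (s * v)) ^ m := by
        gcongr
    _ = C * Real.exp (m * (s * v)) := by rw [← Real.exp_nat_mul]
    _ = C * Real.exp (δ * t ^ (1 / s)) := by
        congr 2
        have hεv : v = (δ / (m * s)) * t ^ (1 / s) := by
          rw [hv, hε, Real.mul_rpow (by positivity) ht, one_div,
            Real.rpow_rpow_inv (by positivity) hs0]
        rw [hεv]; field_simp

-- one dimensional Fourier integral
lemma one_dim_integral (r : ℝ) (hr : 0 < r) (b c : ℕ) :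
    ∫ t in Ioc (0:ℝ) (2 * π), ((r:ℂ) * Complex.exp (t * Complex.I)) ^ b
        * Complex.exp (-(c:ℂ) * t * Complex.I)
      = if b = c then ((r:ℂ) ^ b * ((2 * π : ℝ) : ℂ)) else 0 := by
  have h2π : (0:ℝ) ≤ 2 * π := by positivity
  have hg : ∀ t : ℝ, ((r:ℂ) * Complex.exp (t * Complex.I)) ^ b
      * Complex.exp (-(c:ℂ) * t * Complex.I)
      = (r:ℂ) ^ b * Complex.exp ((((b:ℂ) - c) * Complex.I) * t) := by
    intro t
    rw [mul_pow, ← Complex.exp_nat_mul, mul_assoc, ← Complex.exp_add]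
    congr 1
    ring
  simp_rw [hg]
  rw [MeasureTheory.integral_const_mul, ← intervalIntegral.integral_of_le h2π]
  by_cases hbc : b = c
  · subst hbc
    simp only [sub_self, zero_mul, Complex.exp_zero]
    simp [intervalIntegral.integral_const, Complex.real_smul]
  · have hk : (((b:ℂ) - c) * Complex.I) ≠ 0 := by
      refine mul_ne_zero (sub_ne_zero.mpr ?_) Complex.I_ne_zero
      exact_mod_cast hbc
    rw [integral_exp_mul_complex hk]
    have h1 : Complex.exp ((((b:ℂ) - c) * Complex.I) * ((2 * π : ℝ) : ℂ)) = 1 := by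
      have := Complex.exp_int_mul_two_pi_mul_I ((b:ℤ) - (c:ℤ))
      rw [← this]
      congr 1
      push_cast
      ring
    have h0 : Complex.exp ((((b:ℂ) - c) * Complex.I) * ((0:ℝ):ℂ)) = 1 := by
      simp
    rw [h1, h0, sub_self, zero_div, mul_zero]
    simp [hbc]

lemma cauchy_estimate {m : ℕ} (a : (Fin m → ℕ) → ℂ)
    (hconv : ∀ ζ : EuclideanSpace ℂ (Fin m),
      Summable (fun β : Fin m → ℕ => a β * ∏ i, ζ i ^ β i))
    (r : ℝ) (hr : 0 < r) (M : ℝ)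
    (hM : ∀ ζ : EuclideanSpace ℂ (Fin m), (∀ i, ‖ζ i‖ = r) →
      ‖∑' β : Fin m → ℕ, a β * ∏ i, ζ i ^ β i‖ ≤ M)
    (α : Fin m → ℕ) : ‖a α‖ * r ^ (∑ i, α i) ≤ M := by
  have h2π : (0:ℝ) ≤ 2 * π := by positivity
  set box : Set (Fin m → ℝ) := Set.pi Set.univ (fun _ => Ioc (0:ℝ) (2 * π)) with hbox
  have mbox : MeasurableSet box := MeasurableSet.univ_pi fun _ => measurableSet_Ioc
  set μ : Measure (Fin m → ℝ) := volume.restrict box with hμ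
  have hvolbox : volume box = (ENNReal.ofReal (2 * π)) ^ m := by
    rw [hbox, volume_pi_pi]
    simp [Real.volume_Ioc]
  have hμuniv : μ Set.univ = (ENNReal.ofReal (2 * π)) ^ m := by
    rw [hμ, Measure.restrict_apply_univ, hvolbox]
  haveI : IsFiniteMeasure μ := by
    constructor
    rw [hμuniv]
    exact ENNReal.pow_lt_top ENNReal.ofReal_lt_top
  set T : (Fin m → ℝ) → EuclideanSpace ℂ (Fin m) :=
    fun θ => WithLp.toLp 2 (fun i => (r:ℂ) * Complex.exp ((θ i : ℂ) * Complex.I)) with hT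
  set g : ℕ → ℕ → ℝ → ℂ := fun b c t =>
    ((r:ℂ) * Complex.exp ((t:ℂ) * Complex.I)) ^ b * Complex.exp (-(c:ℂ) * (t:ℂ) * Complex.I)
    with hgdef
  set term : (Fin m → ℕ) → (Fin m → ℝ) → ℂ :=
    fun β θ => a β * ∏ i, g (β i) (α i) (θ i) with hterm
  have hTnorm : ∀ θ i, ‖T θ i‖ = r := by
    intro θ i
    rw [hT]
    simp only [norm_mul, Complex.norm_real]
    rw [Complex.norm_exp]
    simp [abs_of_pos hr]
  have hEnorm : ∀ θ : Fin m → ℝ, ‖∏ i, Complex.exp (-((α i):ℂ) * (θ i:ℂ) * Complex.I)‖ = 1 := by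
    intro θ
    rw [norm_prod]
    refine Finset.prod_eq_one fun i _ => ?_
    rw [Complex.norm_exp]
    have : (-((α i):ℂ) * (θ i:ℂ) * Complex.I).re = 0 := by simp
    rw [this, Real.exp_zero]
  -- pointwise identity for the tsum
  have hsplit : ∀ θ : Fin m → ℝ, (∑' β : Fin m → ℕ, term β θ)
      = (∑' β : Fin m → ℕ, a β * ∏ i, T θ i ^ β i)
        * ∏ i, Complex.exp (-((α i):ℂ) * (θ i:ℂ) * Complex.I) := by
    intro θ
    rw [← tsum_mul_right]
    refine tsum_congr fun β => ?_
    rw [hterm, hgdef]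
    simp only
    rw [Finset.prod_mul_distrib, mul_assoc]
  have hptbound : ∀ θ : Fin m → ℝ, ‖∑' β : Fin m → ℕ, term β θ‖ ≤ M := by
    intro θ
    rw [hsplit θ, norm_mul, hEnorm θ, mul_one]
    exact hM (T θ) (hTnorm θ)
  -- norm of each term
  have htermnorm : ∀ β θ, ‖term β θ‖ = ‖a β‖ * r ^ (∑ i, β i) := by
    intro β θ
    rw [hterm]
    simp only
    rw [norm_mul, norm_prod]
    congr 1
    rw [← Finset.prod_pow_eq_pow_sum]
    refine Finset.prod_congr rfl fun i _ => ?_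
    rw [hgdef]
    simp only
    rw [norm_mul, norm_pow]
    have h1 : ‖(r:ℂ) * Complex.exp ((θ i:ℂ) * Complex.I)‖ = r := by
      simp only [norm_mul, Complex.norm_real]
      rw [Complex.norm_exp]
      simp [abs_of_pos hr]
    have h2 : ‖Complex.exp (-((α i):ℂ) * (θ i:ℂ) * Complex.I)‖ = 1 := by
      rw [Complex.norm_exp]
      have : (-((α i):ℂ) * (θ i:ℂ) * Complex.I).re = 0 := by simp
      rw [this, Real.exp_zero]
    rw [h1, h2, mul_one]
  -- continuity
  have hcont : ∀ β : Fin m → ℕ, Continuous (term β) := by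
    intro β
    refine continuous_const.mul (continuous_finset_prod _ fun i _ => ?_)
    rw [hgdef]
    simp only
    refine Continuous.mul (Continuous.pow ?_ _) ?_
    · exact continuous_const.mul (Complex.continuous_exp.comp
        ((Complex.continuous_ofReal.comp (continuous_apply i)).mul continuous_const))
    · exact Complex.continuous_exp.comp
        (((continuous_const.mul (Complex.continuous_ofReal.comp (continuous_apply i))).mul
          continuous_const))
  -- swap integral and sum
  have hsummable : Summable (fun β : Fin m → ℕ => ‖a β‖ * r ^ (∑ i, β i)) :=
    coeff_summable_aux m a hconv r hr.le
  have hswap : ∫ θ, (∑' β : Fin m → ℕ, term β θ) ∂μ = ∑' β : Fin m → ℕ, ∫ θ, term β θ ∂μ := by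
    refine MeasureTheory.integral_tsum (fun β => (hcont β).aestronglyMeasurable) ?_
    have hlint : ∀ β : Fin m → ℕ, ∫⁻ θ, ‖term β θ‖ₑ ∂μ
        = ENNReal.ofReal (‖a β‖ * r ^ (∑ i, β i)) * μ Set.univ := by
      intro β
      have : (fun θ => (‖term β θ‖ₑ : ℝ≥0∞))
          = fun _ => ENNReal.ofReal (‖a β‖ * r ^ (∑ i, β i)) := by
        funext θ
        rw [← ofReal_norm, htermnorm β θ]
      rw [this, lintegral_const]
    simp_rw [hlint]
    rw [ENNReal.tsum_mul_right]
    refine ENNReal.mul_ne_top ?_ (measure_ne_top μ _)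
    rw [← ENNReal.ofReal_tsum_of_nonneg (fun β => by positivity) hsummable]
    exact ENNReal.ofReal_ne_top
  -- compute each integral
  have hint : ∀ β : Fin m → ℕ, ∫ θ, term β θ ∂μ
      = a β * ∏ i, (if β i = α i then ((r:ℂ) ^ (β i) * ((2 * π : ℝ) : ℂ)) else 0) := by
    intro β
    rw [hterm]
    simp only
    rw [MeasureTheory.integral_const_mul]
    congr 1
    have hind : ∀ θ : Fin m → ℝ, box.indicator (fun θ' => ∏ i, g (β i) (α i) (θ' i)) θ
        = ∏ i, (Ioc (0:ℝ) (2 * π)).indicator (g (β i) (α i)) (θ i) := by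
      intro θ
      by_cases hθ : θ ∈ box
      · rw [Set.indicator_of_mem hθ]
        refine Finset.prod_congr rfl fun i _ => ?_
        rw [Set.indicator_of_mem]
        exact hθ i (Set.mem_univ i)
      · rw [Set.indicator_of_notMem hθ]
        rw [hbox, Set.mem_pi] at hθ
        push_neg at hθ
        obtain ⟨i, _, hi⟩ := hθ
        refine (Finset.prod_eq_zero (Finset.mem_univ i) ?_).symm
        exact Set.indicator_of_notMem hi _
    calc ∫ θ, (∏ i, g (β i) (α i) (θ i)) ∂μ
        = ∫ θ, box.indicator (fun θ' => ∏ i, g (β i) (α i) (θ' i)) θ := by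
          rw [hμ, MeasureTheory.integral_indicator mbox]
      _ = ∫ θ : Fin m → ℝ, ∏ i, (Ioc (0:ℝ) (2 * π)).indicator (g (β i) (α i)) (θ i) := by
          exact congrArg _ (funext hind)
      _ = ∏ i, (∫ t : ℝ, (Ioc (0:ℝ) (2 * π)).indicator (g (β i) (α i)) t) :=
          MeasureTheory.integral_fintype_prod_eq_prod (ι := Fin m)
            (fun i t => (Ioc (0:ℝ) (2 * π)).indicator (g (β i) (α i)) t)
      _ = ∏ i, (∫ t in Ioc (0:ℝ) (2 * π), g (β i) (α i) t) := by
          refine Finset.prod_congr rfl fun i _ => ?_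
          rw [MeasureTheory.integral_indicator measurableSet_Ioc]
      _ = ∏ i, (if β i = α i then ((r:ℂ) ^ (β i) * ((2 * π : ℝ) : ℂ)) else 0) := by
          refine Finset.prod_congr rfl fun i _ => ?_
          exact one_dim_integral r hr (β i) (α i)
  -- only β = α survives
  have htsum : ∑' β : Fin m → ℕ, ∫ θ, term β θ ∂μ
      = a α * ((r:ℂ) ^ (∑ i, α i) * ((2 * π : ℝ) : ℂ) ^ m) := by
    rw [tsum_eq_single α ?_]
    · rw [hint α]
      congr 1
      simp only [eq_self_iff_true, if_true]
      rw [Finset.prod_mul_distrib, Finset.prod_pow_eq_pow_sum, Finset.prod_const,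
        Finset.card_univ, Fintype.card_fin]
    · intro β hβ
      rw [hint β]
      obtain ⟨i, hi⟩ := Function.ne_iff.mp hβ
      rw [Finset.prod_eq_zero (Finset.mem_univ i) (by rw [if_neg hi]), mul_zero]
  -- put it together
  have hI : ‖∫ θ, (∑' β : Fin m → ℕ, term β θ) ∂μ‖ ≤ M * (2 * π) ^ m := by
    have := MeasureTheory.norm_integral_le_of_norm_le_const (μ := μ)
      (f := fun θ => ∑' β : Fin m → ℕ, term β θ) (C := M) (ae_of_all _ hptbound)
    have htr : μ.real Set.univ = (2 * π) ^ m := by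
      rw [measureReal_def, hμuniv, ENNReal.toReal_pow, ENNReal.toReal_ofReal h2π]
    rwa [htr] at this
  rw [hswap, htsum] at hI
  have hnorm : ‖a α * ((r:ℂ) ^ (∑ i, α i) * ((2 * π : ℝ) : ℂ) ^ m)‖
      = (‖a α‖ * r ^ (∑ i, α i)) * (2 * π) ^ m := by
    rw [norm_mul, norm_mul, norm_pow, norm_pow, Complex.norm_real, Complex.norm_real]
    rw [Real.norm_eq_abs, Real.norm_eq_abs, abs_of_pos hr, abs_of_nonneg h2π]
    ring
  rw [hnorm] at hI
  have h2πpos : (0:ℝ) < (2 * π) ^ m := by positivity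
  exact (mul_le_mul_iff_of_pos_right h2πpos).mp hI

lemma reverse_dir (m : ℕ) (hm : 1 ≤ m) (s : ℝ) (hs : 1 ≤ s)
    (a : (Fin m → ℕ) → ℂ)
    (hconv : ∀ ζ : EuclideanSpace ℂ (Fin m),
      Summable (fun α : Fin m → ℕ => a α * ∏ i, ζ i ^ α i))
    (hii : ∀ δ : ℝ, 0 < δ → ∃ C : ℝ, 0 < C ∧ ∀ ζ : EuclideanSpace ℂ (Fin m),
        ‖∑' α : Fin m → ℕ, a α * ∏ i, ζ i ^ α i‖ ≤ C * Real.exp (δ * ‖ζ‖ ^ (1 / s))) :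
    ∀ ε : ℝ, 0 < ε → ∃ C : ℝ, 0 < C ∧ ∀ α : Fin m → ℕ,
        ‖a α‖ ≤ C * ε ^ (∑ i, α i) / ((Nat.factorial (∑ i, α i) : ℝ)) ^ s := by
  intro ε hε
  have hs0 : s ≠ 0 := by linarith
  have hs0' : (0:ℝ) < s := by linarith
  have hm0 : (0:ℝ) < m := by exact_mod_cast hm
  set K : ℝ := Real.exp 1 / ε with hK
  have hK0 : 0 < K := by positivity
  have hεK : ε * K = Real.exp 1 := by
    rw [hK]; field_simp
  set δ : ℝ := 1 / ((m:ℝ) ^ ((1/2) * (1/s)) * K ^ (1/s)) with hδdef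
  have hmr : (0:ℝ) < (m:ℝ) ^ ((1/2) * (1/s)) := Real.rpow_pos_of_pos hm0 _
  have hKr : (0:ℝ) < K ^ (1/s) := Real.rpow_pos_of_pos hK0 _
  have hδ : 0 < δ := by positivity
  obtain ⟨C, hC0, hC⟩ := hii δ hδ
  refine ⟨C * Real.exp 1, by positivity, fun α => ?_⟩
  set n : ℕ := ∑ i, α i with hn
  set r : ℝ := ((n:ℝ) ^ s + 1) * K with hrdef
  have hns : (0:ℝ) ≤ (n:ℝ) ^ s := Real.rpow_nonneg (Nat.cast_nonneg n) s
  have hr : 0 < r := by positivity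
  set M : ℝ := C * Real.exp (δ * (Real.sqrt m * r) ^ (1 / s)) with hM
  -- the sup bound on the torus of radius r
  have hMval : ∀ ζ : EuclideanSpace ℂ (Fin m), (∀ i, ‖ζ i‖ = r) →
      ‖∑' β : Fin m → ℕ, a β * ∏ i, ζ i ^ β i‖ ≤ M := by
    intro ζ hζ
    have hnormζ : ‖ζ‖ = Real.sqrt m * r := by
      rw [EuclideanSpace.norm_eq]
      have : ∀ i : Fin m, ‖ζ i‖ ^ 2 = r ^ 2 := fun i => by rw [hζ i]
      rw [Finset.sum_congr rfl (fun i _ => this i), Finset.sum_const, Finset.card_univ,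
        Fintype.card_fin, nsmul_eq_mul]
      rw [Real.sqrt_mul (Nat.cast_nonneg m), Real.sqrt_sq hr.le]
    have := hC ζ
    rwa [hnormζ] at this
  have key := cauchy_estimate a hconv r hr M hMval α
  rw [← hn] at key
  -- bound the exponent
  have hexp_le : δ * (Real.sqrt m * r) ^ (1 / s) ≤ (n:ℝ) + 1 := by
    have hsqrt : Real.sqrt m = (m:ℝ) ^ ((1:ℝ)/2) := Real.sqrt_eq_rpow _
    have h1 : (Real.sqrt m * r) ^ (1/s)
        = (m:ℝ) ^ ((1/2) * (1/s)) * (((n:ℝ) ^ s + 1) ^ (1/s) * K ^ (1/s)) := by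
      rw [hrdef, Real.mul_rpow (Real.sqrt_nonneg _) (by positivity),
        Real.mul_rpow (by positivity) hK0.le, hsqrt, ← Real.rpow_mul hm0.le]
    have h2 : ((n:ℝ) ^ s + 1) ^ (1/s) ≤ (n:ℝ) + 1 := by
      have h' := NNReal.rpow_add_rpow_le_add (n : ℝ≥0) 1 hs
      have hcoe := NNReal.coe_le_coe.mpr h'
      push_cast at hcoe
      simpa using hcoe
    calc δ * (Real.sqrt m * r) ^ (1/s)
        = δ * ((m:ℝ) ^ ((1/2) * (1/s)) * K ^ (1/s)) * ((n:ℝ) ^ s + 1) ^ (1/s) := by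
          rw [h1]; ring
      _ = ((n:ℝ) ^ s + 1) ^ (1/s) := by
          rw [hδdef]; field_simp
      _ ≤ (n:ℝ) + 1 := h2
  have h1 : ‖a α‖ * r ^ n ≤ C * Real.exp 1 * Real.exp (n:ℝ) := by
    calc ‖a α‖ * r ^ n ≤ M := key
      _ ≤ C * Real.exp ((n:ℝ) + 1) := by
          rw [hM]
          exact mul_le_mul_of_nonneg_left (Real.exp_le_exp.mpr hexp_le) hC0.le
      _ = C * Real.exp 1 * Real.exp (n:ℝ) := by rw [Real.exp_add]; ring
  -- lower bound for r ^ n and factorial bound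
  have h2 : Real.exp (n:ℝ) * ((Nat.factorial n : ℝ)) ^ s ≤ ε ^ n * r ^ n := by
    have hfa : ((Nat.factorial n : ℝ)) ^ s ≤ (((n:ℝ) ^ s)) ^ n := by
      have hcomm : (((n:ℝ)) ^ n) ^ s = (((n:ℝ) ^ s)) ^ n := by
        rw [← Real.rpow_natCast ((n:ℝ)) n, ← Real.rpow_mul (Nat.cast_nonneg n), mul_comm,
          Real.rpow_mul (Nat.cast_nonneg n), Real.rpow_natCast]
      rw [← hcomm]
      refine Real.rpow_le_rpow (Nat.cast_nonneg _) ?_ (by positivity)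
      exact_mod_cast Nat.factorial_le_pow n
    have hrn : (((n:ℝ) ^ s)) ^ n * K ^ n ≤ r ^ n := by
      rw [← mul_pow]
      refine pow_le_pow_left₀ (by positivity) ?_ n
      rw [hrdef]
      have : (n:ℝ) ^ s ≤ (n:ℝ) ^ s + 1 := by linarith
      exact mul_le_mul_of_nonneg_right this hK0.le
    calc Real.exp (n:ℝ) * ((Nat.factorial n : ℝ)) ^ s
        ≤ Real.exp (n:ℝ) * (((n:ℝ) ^ s)) ^ n :=
          mul_le_mul_of_nonneg_left hfa (Real.exp_nonneg _)
      _ = (ε * K) ^ n * (((n:ℝ) ^ s)) ^ n := by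
          rw [hεK, ← Real.exp_one_pow]
      _ = ε ^ n * ((((n:ℝ) ^ s)) ^ n * K ^ n) := by rw [mul_pow]; ring
      _ ≤ ε ^ n * r ^ n := by
          refine mul_le_mul_of_nonneg_left hrn (by positivity)
  -- conclude
  have hfpos : (0:ℝ) < ((Nat.factorial n : ℝ)) ^ s :=
    Real.rpow_pos_of_pos (by exact_mod_cast Nat.factorial_pos n) s
  have hrn : (0:ℝ) < r ^ n := pow_pos hr n
  rw [le_div_iff₀ hfpos]
  have h3 := mul_le_mul h1 h2 (by positivity) (by positivity)
  have h4 : (‖a α‖ * ((Nat.factorial n : ℝ)) ^ s) * (r ^ n * Real.exp (n:ℝ))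
      ≤ (C * Real.exp 1 * ε ^ n) * (r ^ n * Real.exp (n:ℝ)) := by
    ring_nf at h3 ⊢
    linarith
  exact (mul_le_mul_iff_of_pos_right (by positivity)).mp h4

/-- For an everywhere convergent power series `Q(ζ) = Σ_α a_α ζ^α` in `m` complex
variables, the coefficient bounds of type `{p!^s}` (for every `ε > 0` there is
`C_ε > 0` with `|a_α| ≤ C_ε ε^{|α|}/(|α|!)^s`) are equivalent to the growth bounds
(for every `δ > 0` there is `C_δ > 0` with `|Q(ζ)| ≤ C_δ exp(δ‖ζ‖^{1/s})`). -/
theorem coeff_bounds_iff_growth_bounds (m : ℕ) (hm : 1 ≤ m) (s : ℝ) (hs : 1 ≤ s)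
    (a : (Fin m → ℕ) → ℂ)
    (hconv : ∀ ζ : EuclideanSpace ℂ (Fin m),
      Summable (fun α : Fin m → ℕ => a α * ∏ i, ζ i ^ α i)) :
    (∀ ε : ℝ, 0 < ε → ∃ C : ℝ, 0 < C ∧ ∀ α : Fin m → ℕ,
        ‖a α‖ ≤ C * ε ^ (∑ i, α i) / ((Nat.factorial (∑ i, α i) : ℝ)) ^ s)
    ↔
    (∀ δ : ℝ, 0 < δ → ∃ C : ℝ, 0 < C ∧ ∀ ζ : EuclideanSpace ℂ (Fin m),
        ‖∑' α : Fin m → ℕ, a α * ∏ i, ζ i ^ α i‖ ≤ C * Real.exp (δ * ‖ζ‖ ^ (1 / s))) := by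
  constructor
  · exact forward_dir m hm s hs a hconv
  · exact reverse_dir m hm s hs a hconv
end

section
/- Let m ≥ 1 be an integer and let s, t be real numbers with 1 < s < t. Let F : ℝ^m → ℂ be a function such that for every ε > 0 there exists C_ε > 0 with |F(ξ)| ≤ C_ε · exp(ε ‖ξ‖^{1/s}) for all ξ ∈ ℝ^m. Then there exist a positive nondecreasing function σ : ℕ → ℝ with σ(p) → ∞ as p → ∞, and a constant C > 0, such that for every ξ ∈ ℝ^m: |F(ξ)| ≤ C · exp(−‖ξ‖^{1/t}) · ∏_{p=1}^∞ (1 + ‖ξ‖²/(p^{2s} σ(p))). -/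
open scoped BigOperators

set_option maxHeartbeats 2000000 in
/-- If `F` satisfies `|F(ξ)| ≤ C_ε exp(ε‖ξ‖^{1/s})` for every `ε > 0` (the Fourier-side
characterization of a compactly supported ultradistribution of order `s`), then for any
`t > s` there are a positive nondecreasing `σ : ℕ → ℝ` tending to `∞` and a constant
`C > 0` such that `|F(ξ)| ≤ C exp(−‖ξ‖^{1/t}) ∏_{p=1}^∞ (1 + ‖ξ‖²/(p^{2s} σ(p)))`. -/
theorem quotient_decay (m : ℕ) (hm : 1 ≤ m) (s t : ℝ) (hs : 1 < s) (hst : s < t)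
    (F : EuclideanSpace ℝ (Fin m) → ℂ)
    (hF : ∀ ε : ℝ, 0 < ε → ∃ C : ℝ, 0 < C ∧ ∀ ξ : EuclideanSpace ℝ (Fin m),
      ‖F ξ‖ ≤ C * Real.exp (ε * ‖ξ‖ ^ (1 / s))) :
    ∃ σ : ℕ → ℝ, (∀ p, 0 < σ p) ∧ Monotone σ ∧
      Filter.Tendsto σ Filter.atTop Filter.atTop ∧
      ∃ C : ℝ, 0 < C ∧ ∀ ξ : EuclideanSpace ℝ (Fin m),
        ‖F ξ‖ ≤ C * Real.exp (-‖ξ‖ ^ (1 / t)) *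
          ∏' p : ℕ, (1 + ‖ξ‖ ^ 2 / (((p : ℝ) + 1) ^ (2 * s) * σ (p + 1))) := by
  classical
  have hs0 : (0:ℝ) < s := by linarith
  have ht0 : (0:ℝ) < t := by linarith
  have hsne : s ≠ 0 := ne_of_gt hs0
  have htne : t ≠ 0 := ne_of_gt ht0
  have hs1 : (0:ℝ) < 1/s := by positivity
  have ht1 : (0:ℝ) < 1/t := by positivity
  have hδ : (0:ℝ) < 1/s - 1/t := by
    have h : 1/t < 1/s := one_div_lt_one_div_of_lt hs0 hst
    linarith
  set δ : ℝ := 1/s - 1/t with hδdef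
  have he1 : (1:ℝ) ≤ Real.exp 1 := by
    have := Real.add_one_le_exp (1:ℝ); linarith
  set b : ℕ → ℝ := fun k => (2 * Real.exp 1 * ((k:ℝ)+1))⁻¹ with hbdef
  have hbpos : ∀ k : ℕ, 0 < b k := by
    intro k
    have : (0:ℝ) < (k:ℝ) + 1 := by positivity
    have he : (0:ℝ) < Real.exp 1 := Real.exp_pos 1
    rw [hbdef]
    positivity
  choose C' hC'pos hC'bd using fun k => hF (b k) (hbpos k)
  set R' : ℕ → ℝ := fun k =>
    max (max 1 ((2 / b k) ^ (1/δ))) ((max 1 (Real.log (C' k))) ^ t) with hR'def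
  have hR'1 : ∀ k, (1:ℝ) ≤ R' k := fun k => le_trans (le_max_left 1 _) (le_max_left _ _)
  set R : ℕ → ℝ := fun k => (k:ℝ) + ∑ j ∈ Finset.range (k+1), R' j with hRdef
  have hRk : ∀ k, R' k ≤ R k := by
    intro k
    have h1 : R' k ≤ ∑ j ∈ Finset.range (k+1), R' j :=
      Finset.single_le_sum (f := R') (fun j _ => le_trans zero_le_one (hR'1 j))
        (Finset.self_mem_range_succ k)
    have h2 : (0:ℝ) ≤ (k:ℝ) := Nat.cast_nonneg k
    calc R' k ≤ ∑ j ∈ Finset.range (k+1), R' j := h1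
      _ ≤ (k:ℝ) + ∑ j ∈ Finset.range (k+1), R' j := by linarith
  have hRge : ∀ k : ℕ, (k:ℝ) ≤ R k := fun k =>
    le_add_of_nonneg_right (Finset.sum_nonneg fun j _ => le_trans zero_le_one (hR'1 j))
  have hR1 : ∀ k, (1:ℝ) ≤ R k := fun k => le_trans (hR'1 k) (hRk k)
  -- the integer thresholds
  set M : ℕ → ℕ := fun k =>
    Nat.rec 0 (fun k Mk => max (Mk+1) (⌈b k * (R (k+1)) ^ (1/s)⌉₊ + 1)) k with hMdef
  have hMsucc : ∀ k, M (k+1) = max (M k + 1) (⌈b k * (R (k+1)) ^ (1/s)⌉₊ + 1) := fun k => rfl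
  have hMlt : StrictMono M := by
    apply strictMono_nat_of_lt_succ
    intro k
    rw [hMsucc]
    exact lt_of_lt_of_le (Nat.lt_succ_self _) (le_max_left _ _)
  clear_value M
  clear hMdef
  -- sigma
  set σ : ℕ → ℝ :=
    fun p => max 1 (((Finset.range (p+1)).filter (fun j => M j ≤ p)).card : ℝ) with hσdef
  have hσ1 : ∀ p, (1:ℝ) ≤ σ p := fun p => le_max_left _ _
  have hσpos : ∀ p, 0 < σ p := fun p => lt_of_lt_of_le one_pos (hσ1 p)
  have hσmono : Monotone σ := by
    intro p q hpq
    apply max_le_max le_rfl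
    apply Nat.cast_le.mpr
    apply Finset.card_le_card
    intro j hj
    simp only [Finset.mem_filter, Finset.mem_range] at hj ⊢
    exact ⟨by omega, le_trans hj.2 hpq⟩
  have hσle : ∀ k p, p < M (k+1) → σ p ≤ (k:ℝ) + 1 := by
    intro k p hp
    apply max_le
    · have : (0:ℝ) ≤ (k:ℝ) := Nat.cast_nonneg k
      linarith
    · have hsub : (Finset.range (p+1)).filter (fun j => M j ≤ p) ⊆ Finset.range (k+1) := by
        intro j hj
        simp only [Finset.mem_filter, Finset.mem_range] at hj ⊢
        by_contra h
        push_neg at h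
        have h2 : M (k+1) ≤ M j := hMlt.monotone h
        omega
      have h3 := Finset.card_le_card hsub
      rw [Finset.card_range] at h3
      exact_mod_cast Nat.cast_le.mpr h3
  have hσtend : Filter.Tendsto σ Filter.atTop Filter.atTop := by
    rw [Filter.tendsto_atTop]
    intro A
    filter_upwards [Filter.eventually_ge_atTop (M ⌈max 0 A⌉₊)] with p hp
    have hsub : Finset.range (⌈max 0 A⌉₊ + 1) ⊆ (Finset.range (p+1)).filter (fun j => M j ≤ p) := by
      intro j hj
      simp only [Finset.mem_range] at hj
      have hj' : j ≤ ⌈max 0 A⌉₊ := by omega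
      have h1 : M j ≤ p := le_trans (hMlt.monotone hj') hp
      have h2 : j ≤ M j := hMlt.le_apply
      simp only [Finset.mem_filter, Finset.mem_range]
      exact ⟨by omega, h1⟩
    have h3 := Finset.card_le_card hsub
    rw [Finset.card_range] at h3
    have h4 : (max 0 A : ℝ) ≤ ((⌈max 0 A⌉₊ + 1 : ℕ) : ℝ) := by
      have := Nat.le_ceil (max 0 A)
      push_cast
      linarith
    have h5 : ((⌈max 0 A⌉₊ + 1 : ℕ) : ℝ) ≤
        (((Finset.range (p+1)).filter (fun j => M j ≤ p)).card : ℝ) := Nat.cast_le.mpr h3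
    have h6 : (((Finset.range (p+1)).filter (fun j => M j ≤ p)).card : ℝ) ≤ σ p :=
      le_max_right _ _
    have h7 : A ≤ max 0 A := le_max_right _ _
    linarith
  -- the constant
  set C : ℝ := max 1 (C' 0 * Real.exp ((R 0) ^ (1/s) + (R 0) ^ (1/t))) with hCdef
  have hC1 : (1:ℝ) ≤ C := le_max_left _ _
  have hCpos : 0 < C := lt_of_lt_of_le one_pos hC1
  refine ⟨σ, hσpos, hσmono, hσtend, C, hCpos, ?_⟩
  intro ξ
  set r : ℝ := ‖ξ‖ with hrdef
  have hr0 : 0 ≤ r := norm_nonneg _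
  set f : ℕ → ℝ := fun p => 1 + r ^ 2 / (((p:ℝ) + 1) ^ (2 * s) * σ (p + 1)) with hfdef
  have hdpos : ∀ p : ℕ, 0 < ((p:ℝ) + 1) ^ (2 * s) * σ (p + 1) := by
    intro p
    exact mul_pos (Real.rpow_pos_of_pos (by positivity) _) (hσpos _)
  have hf1 : ∀ p, (1:ℝ) ≤ f p := by
    intro p
    have h : 0 ≤ r ^ 2 / (((p:ℝ) + 1) ^ (2 * s) * σ (p + 1)) :=
      div_nonneg (by positivity) (hdpos p).le
    simp only [hfdef]
    linarith
  have hfpos : ∀ p, 0 < f p := fun p => lt_of_lt_of_le one_pos (hf1 p)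
  have hlog_nonneg : ∀ p, 0 ≤ Real.log (f p) := fun p => Real.log_nonneg (hf1 p)
  have hsummable : Summable (fun p => Real.log (f p)) := by
    have h1 : Summable (fun n : ℕ => 1 / ((n:ℝ)) ^ 2) :=
      Real.summable_one_div_nat_pow.mpr one_lt_two
    have h2 : Summable (fun n : ℕ => 1 / ((n:ℝ) + 1) ^ 2) := by
      have h3 := (summable_nat_add_iff (f := fun n : ℕ => 1 / ((n:ℝ)) ^ 2) 1).mpr h1
      exact h3.congr (by intro n; push_cast; ring)
    have hbase : Summable (fun n : ℕ => r ^ 2 * (1 / ((n:ℝ) + 1) ^ 2)) := h2.mul_left _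
    apply Summable.of_nonneg_of_le hlog_nonneg _ hbase
    intro p
    have hBpos : (0:ℝ) < ((p:ℝ) + 1) ^ 2 := by positivity
    have hBA : ((p:ℝ) + 1) ^ 2 ≤ ((p:ℝ) + 1) ^ (2 * s) * σ (p + 1) := by
      have hb1 : (1:ℝ) ≤ (p:ℝ) + 1 := by
        have : (0:ℝ) ≤ (p:ℝ) := Nat.cast_nonneg p
        linarith
      have h1 : ((p:ℝ) + 1) ^ ((2:ℕ):ℝ) ≤ ((p:ℝ) + 1) ^ (2 * s) :=
        Real.rpow_le_rpow_of_exponent_le hb1 (by push_cast; linarith only [hs])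
      rw [Real.rpow_natCast] at h1
      calc ((p:ℝ) + 1) ^ 2 ≤ ((p:ℝ) + 1) ^ (2 * s) * 1 := by rw [mul_one]; exact h1
        _ ≤ _ := mul_le_mul_of_nonneg_left (hσ1 _) (Real.rpow_nonneg (by positivity) _)
    calc Real.log (f p) ≤ f p - 1 := Real.log_le_sub_one_of_pos (hfpos p)
      _ = r ^ 2 / (((p:ℝ) + 1) ^ (2 * s) * σ (p + 1)) := by simp [hfdef]
      _ ≤ r ^ 2 / (((p:ℝ) + 1) ^ 2) := div_le_div_of_nonneg_left (by positivity) hBpos hBA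
      _ = r ^ 2 * (1 / ((p:ℝ) + 1) ^ 2) := by ring
  set S : ℝ := ∑' p, Real.log (f p) with hSdef
  have hS0 : 0 ≤ S := tsum_nonneg hlog_nonneg
  have hHasProd : HasProd f (Real.exp S) := by
    have h := hsummable.hasSum.rexp
    have heq : (Real.exp ∘ fun p => Real.log (f p)) = f :=
      funext fun p => Real.exp_log (hfpos p)
    rwa [heq] at h
  have hPeq : (∏' p, f p) = Real.exp S := hHasProd.tprod_eq
  show ‖F ξ‖ ≤ C * Real.exp (-r ^ (1/t)) * ∏' p, f p
  rw [hPeq]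
  rcases lt_or_ge r (R 0) with hcase | hcase
  · -- small r
    have hb0 : b 0 ≤ 1 := by
      rw [hbdef]
      simp only [Nat.cast_zero, zero_add, mul_one]
      rw [inv_le_one_iff₀]
      right; linarith
    have hFb := hC'bd 0 ξ
    rw [← hrdef] at hFb
    have h1 : b 0 * r ^ (1/s) ≤ (R 0) ^ (1/s) :=
      calc b 0 * r ^ (1/s) ≤ 1 * r ^ (1/s) :=
            mul_le_mul_of_nonneg_right hb0 (Real.rpow_nonneg hr0 _)
        _ = r ^ (1/s) := one_mul _
        _ ≤ (R 0) ^ (1/s) := Real.rpow_le_rpow hr0 hcase.le hs1.le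
    have h2 : r ^ (1/t) ≤ (R 0) ^ (1/t) := Real.rpow_le_rpow hr0 hcase.le ht1.le
    calc ‖F ξ‖ ≤ C' 0 * Real.exp (b 0 * r ^ (1/s)) := hFb
      _ ≤ C' 0 * Real.exp ((R 0) ^ (1/s) + (R 0) ^ (1/t) + (-r ^ (1/t)) + S) := by
          apply mul_le_mul_of_nonneg_left _ (hC'pos 0).le
          apply Real.exp_le_exp.mpr
          linarith
      _ = (C' 0 * Real.exp ((R 0) ^ (1/s) + (R 0) ^ (1/t))) * Real.exp (-r ^ (1/t)) *
            Real.exp S := by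
          rw [Real.exp_add, Real.exp_add, ← mul_assoc, ← mul_assoc]
      _ ≤ C * Real.exp (-r ^ (1/t)) * Real.exp S := by
          apply mul_le_mul_of_nonneg_right _ (Real.exp_nonneg _)
          exact mul_le_mul_of_nonneg_right (le_max_right _ _) (Real.exp_nonneg _)
  · -- main case
    have hr1 : (1:ℝ) ≤ r := le_trans (hR1 0) hcase
    have hrpos : 0 < r := lt_of_lt_of_le one_pos hr1
    set k := Nat.findGreatest (fun j => R j ≤ r) ⌈r⌉₊ with hkdef
    have hk1 : R k ≤ r := by
      have h := Nat.findGreatest_spec (P := fun j => R j ≤ r) (n := ⌈r⌉₊) (Nat.zero_le _) hcase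
      rw [hkdef]
      exact h
    have hk2 : r < R (k+1) := by
      by_cases h : k + 1 ≤ ⌈r⌉₊
      · have h' : Nat.findGreatest (fun j => R j ≤ r) ⌈r⌉₊ < k + 1 := by
          rw [← hkdef]; exact Nat.lt_succ_self k
        have := Nat.findGreatest_is_greatest h' h
        exact lt_of_not_ge this
      · push_neg at h
        have hk_le : k ≤ ⌈r⌉₊ := Nat.findGreatest_le _
        have hceil : r ≤ (⌈r⌉₊ : ℝ) := Nat.le_ceil r
        have h2 : ((k:ℝ) + 1) ≤ R (k+1) := by
          have := hRge (k+1); push_cast at this; linarith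
        have h3 : (⌈r⌉₊ : ℝ) ≤ (k : ℝ) := Nat.cast_le.mpr (by omega)
        linarith
    clear_value k
    clear hkdef
    have hrR' : R' k ≤ r := le_trans (hRk k) hk1
    have hA : (2 / b k) ^ (1/δ) ≤ r :=
      le_trans (le_trans (le_max_right _ _) (le_max_left _ _)) hrR'
    have hB : (max 1 (Real.log (C' k))) ^ t ≤ r := le_trans (le_max_right _ _) hrR'
    have hbk : 0 < b k := hbpos k
    have h2bk : 2 ≤ b k * r ^ δ := by
      have h0 : (0:ℝ) ≤ 2 / b k := by positivity
      have h1 : ((2 / b k) ^ (1/δ)) ^ δ ≤ r ^ δ :=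
        Real.rpow_le_rpow (Real.rpow_nonneg h0 _) hA hδ.le
      rw [← Real.rpow_mul h0, one_div, inv_mul_cancel₀ (ne_of_gt hδ), Real.rpow_one] at h1
      rw [div_le_iff₀ hbk] at h1
      linarith only [h1]
    have hlogC : Real.log (C' k) ≤ r ^ (1/t) := by
      have h0 : (0:ℝ) ≤ max 1 (Real.log (C' k)) := le_trans zero_le_one (le_max_left _ _)
      have h1 : ((max 1 (Real.log (C' k))) ^ t) ^ (1/t) ≤ r ^ (1/t) :=
        Real.rpow_le_rpow (Real.rpow_nonneg h0 _) hB ht1.le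
      rw [← Real.rpow_mul h0, mul_one_div, div_self htne, Real.rpow_one] at h1
      exact le_trans (le_max_right _ _) h1
    have hrt1 : (1:ℝ) ≤ r ^ (1/t) := by
      have := Real.rpow_le_rpow_of_exponent_le hr1 ht1.le
      rwa [Real.rpow_zero] at this
    have hsplit : r ^ (1/s) = r ^ (1/t) * r ^ δ := by
      rw [← Real.rpow_add hrpos]
      congr 1
      rw [hδdef]; ring
    set x := b k * r ^ (1/s) with hxdef
    have hx2 : 2 * r ^ (1/t) ≤ x := by
      rw [hxdef, hsplit]
      calc 2 * r ^ (1/t) = r ^ (1/t) * 2 := by ring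
        _ ≤ r ^ (1/t) * (b k * r ^ δ) :=
            mul_le_mul_of_nonneg_left h2bk (Real.rpow_nonneg hr0 _)
        _ = b k * (r ^ (1/t) * r ^ δ) := by ring
    have hx1 : (1:ℝ) ≤ x := by linarith
    have hxpos : 0 < x := lt_of_lt_of_le one_pos hx1
    set n := ⌈x⌉₊ with hndef
    have hnx : x ≤ (n:ℝ) := Nat.le_ceil x
    have hn2x : (n:ℝ) ≤ 2 * x := by
      have := Nat.ceil_lt_add_one hxpos.le
      rw [← hndef] at this
      linarith
    have hnM : n < M (k+1) := by
      rw [hndef]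
      have hle : x ≤ b k * (R (k+1)) ^ (1/s) := by
        rw [hxdef]
        exact mul_le_mul_of_nonneg_left (Real.rpow_le_rpow hr0 hk2.le hs1.le) hbk.le
      have hceil : ⌈x⌉₊ ≤ ⌈b k * (R (k+1)) ^ (1/s)⌉₊ := Nat.ceil_le_ceil hle
      have h4 := le_max_right (M k + 1) (⌈b k * (R (k+1)) ^ (1/s)⌉₊ + 1)
      rw [hMsucc]
      omega
    clear_value n
    clear hndef
    have hkey : ∀ p < n, (2:ℝ) ≤ Real.log (f p) := by
      intro p hp
      have hp1 : (p:ℝ) + 1 ≤ (n:ℝ) := by exact_mod_cast Nat.succ_le_of_lt hp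
      have hσb : σ (p+1) ≤ (k:ℝ) + 1 := hσle k (p+1) (by omega)
      have hden : ((p:ℝ) + 1) ^ (2 * s) * σ (p + 1) ≤ (2 * x) ^ (2 * s) * ((k:ℝ) + 1) := by
        apply mul_le_mul _ hσb (hσpos _).le (Real.rpow_nonneg (by positivity) _)
        exact Real.rpow_le_rpow (by positivity) (le_trans hp1 hn2x) (by linarith)
      have hx2s : (2 * x) ^ (2 * s) = (2 * b k) ^ (2 * s) * r ^ 2 := by
        rw [hxdef, show 2 * (b k * r ^ (1/s)) = (2 * b k) * r ^ (1/s) by ring]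
        rw [Real.mul_rpow (by positivity) (Real.rpow_nonneg hr0 _)]
        congr 1
        rw [← Real.rpow_mul hr0, show (1/s) * (2 * s) = ((2:ℕ):ℝ) by push_cast; field_simp]
        exact Real.rpow_natCast r 2
      have hnum : Real.exp 2 * ((2 * b k) ^ (2 * s) * ((k:ℝ) + 1)) ≤ 1 := by
        have h2b : 2 * b k = (Real.exp 1 * ((k:ℝ) + 1))⁻¹ := by
          rw [hbdef]
          rw [mul_inv]
          field_simp
        have hk0 : (0:ℝ) ≤ (k:ℝ) := Nat.cast_nonneg k
        have hk1' : (1:ℝ) ≤ (k:ℝ) + 1 := by linarith only [hk0]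
        have hbase1 : (1:ℝ) ≤ Real.exp 1 * ((k:ℝ) + 1) := by
          have h := mul_le_mul he1 hk1' zero_le_one (le_trans zero_le_one he1)
          simpa using h
        have hpow : Real.exp 2 * ((k:ℝ) + 1) ≤ (Real.exp 1 * ((k:ℝ) + 1)) ^ (2 * s) := by
          have h1 : (Real.exp 1 * ((k:ℝ) + 1)) ^ ((2:ℕ):ℝ) ≤
              (Real.exp 1 * ((k:ℝ) + 1)) ^ (2 * s) :=
            Real.rpow_le_rpow_of_exponent_le hbase1 (by push_cast; linarith only [hs])
          rw [Real.rpow_natCast] at h1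
          have he2 : Real.exp 1 ^ 2 = Real.exp 2 := by
            rw [sq, ← Real.exp_add]; norm_num
          have hstep : Real.exp 2 * ((k:ℝ) + 1) ≤ (Real.exp 1 * ((k:ℝ) + 1)) ^ 2 := by
            have h5 : (Real.exp 1 * ((k:ℝ) + 1)) ^ 2 =
                Real.exp 2 * (((k:ℝ) + 1) * ((k:ℝ) + 1)) := by
              rw [mul_pow, he2]; ring
            rw [h5]
            have h6 : ((k:ℝ) + 1) ≤ ((k:ℝ) + 1) * ((k:ℝ) + 1) :=
              le_mul_of_one_le_left (by linarith only [hk0]) hk1'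
            exact mul_le_mul_of_nonneg_left h6 (Real.exp_nonneg 2)
          linarith only [hstep, h1]
        have hp2 : 0 < (Real.exp 1 * ((k:ℝ) + 1)) ^ (2 * s) :=
          Real.rpow_pos_of_pos (by positivity) _
        rw [h2b, Real.inv_rpow (by positivity)]
        rw [show Real.exp 2 * (((Real.exp 1 * ((k:ℝ) + 1)) ^ (2 * s))⁻¹ * ((k:ℝ) + 1)) =
          (Real.exp 2 * ((k:ℝ) + 1)) / ((Real.exp 1 * ((k:ℝ) + 1)) ^ (2 * s)) by ring]
        rw [div_le_one hp2]
        exact hpow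
      have hr2 : Real.exp 2 * (((p:ℝ) + 1) ^ (2 * s) * σ (p + 1)) ≤ r ^ 2 := by
        calc Real.exp 2 * (((p:ℝ) + 1) ^ (2 * s) * σ (p + 1))
            ≤ Real.exp 2 * ((2 * x) ^ (2 * s) * ((k:ℝ) + 1)) :=
              mul_le_mul_of_nonneg_left hden (Real.exp_nonneg 2)
          _ = (Real.exp 2 * ((2 * b k) ^ (2 * s) * ((k:ℝ) + 1))) * r ^ 2 := by
              rw [hx2s]; ring
          _ ≤ 1 * r ^ 2 := mul_le_mul_of_nonneg_right hnum (by positivity)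
          _ = r ^ 2 := one_mul _
      have hfp : Real.exp 2 ≤ f p := by
        have h := (le_div_iff₀ (hdpos p)).mpr hr2
        have h2 : f p = 1 + r ^ 2 / (((p:ℝ) + 1) ^ (2 * s) * σ (p + 1)) := rfl
        rw [h2]
        linarith
      calc (2:ℝ) = Real.log (Real.exp 2) := (Real.log_exp 2).symm
        _ ≤ Real.log (f p) := Real.log_le_log (Real.exp_pos 2) hfp
    have hsum : 2 * x ≤ S := by
      have h1 : ∑ p ∈ Finset.range n, (2:ℝ) ≤ ∑ p ∈ Finset.range n, Real.log (f p) :=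
        Finset.sum_le_sum (fun p hp => hkey p (Finset.mem_range.mp hp))
      have h2 : ∑ p ∈ Finset.range n, Real.log (f p) ≤ S :=
        Summable.sum_le_tsum (Finset.range n) (fun p _ => hlog_nonneg p) hsummable
      have h3 : ∑ p ∈ Finset.range n, (2:ℝ) = 2 * (n:ℝ) := by
        rw [Finset.sum_const, Finset.card_range]
        push_cast
        ring
      rw [h3] at h1
      linarith
    have hFb := hC'bd k ξ
    rw [← hrdef, ← hxdef] at hFb
    calc ‖F ξ‖ ≤ C' k * Real.exp x := hFb
      _ = Real.exp (Real.log (C' k) + x) := by rw [Real.exp_add, Real.exp_log (hC'pos k)]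
      _ ≤ Real.exp (-r ^ (1/t) + S) := by
          apply Real.exp_le_exp.mpr
          linarith
      _ = 1 * Real.exp (-r ^ (1/t)) * Real.exp S := by rw [Real.exp_add, one_mul]
      _ ≤ C * Real.exp (-r ^ (1/t)) * Real.exp S := by
          apply mul_le_mul_of_nonneg_right _ (Real.exp_nonneg _)
          exact mul_le_mul_of_nonneg_right hC1 (Real.exp_nonneg _)
end

section
/- Let m ≥ 1 be an integer, s ≥ 1 a real number, and f : ℝ^m → ℂ a continuous function satisfying: (rapid decay) for every N ∈ ℕ there exists C_N > 0 with |f(ξ)| ≤ C_N (1 + ‖ξ‖)^{−N} for all ξ ∈ ℝ^m; and (failure of Gevrey-s decay) for every real M > 1 there exist N ∈ ℕ and ξ ∈ ℝ^m ∖ {0} with |f(ξ)| > M^{N+1} (N!)^s ‖ξ‖^{−N}. Then there exists a sequence (b_k)_{k ∈ ℕ} of nonnegative real numbers such that: (i) for every ε > 0 there exists C_ε > 0 with b_k ≤ C_ε ε^k/(k!)^s for all k ∈ ℕ; and (ii) for every N₀ ∈ ℕ and every C > 0 there exists ξ ∈ ℝ^m with (Σ_{k=0}^∞ b_k ‖ξ‖^k)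 · |f(ξ)| > C (1 + ‖ξ‖)^{N₀}. -/
/-!
Choose Gevrey-failure witnesses `‖ξ_t‖^{K_t} |f(ξ_t)| > M_t^{K_t+1} (K_t!)^s` with
`M_t = μ_t²`, `μ_t = 2^s · 2(t+1)`. Rapid decay rules out witnesses with bounded `K`, so the
`K_t` can be taken strictly increasing. Put `b_k = 1 / ((k!)^s w_k^k)`, where `w_k - 1` counts
the witness indices below `k`. Since `w_k → ∞`, `b_k (k!)^s` is eventually below every `ε^k`.
On the other hand `w ≤ t + L + 1` up to `K_t + L`, and `(K+L)! ≤ 2^{K+L} K! L!`, so the single term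
`b_{K_t+L} ‖ξ_t‖^{K_t+L} |f(ξ_t)|` is at least `‖ξ_t‖^L μ_t / (L!)^s`; taking `L = 0` when
`‖ξ_t‖ ≤ 1` and `L = N₀` otherwise beats `C (1 + ‖ξ_t‖)^{N₀}` once `t` is large.
-/

open Filter Finset
open scoped Nat

theorem Nat.factorial_add_le_two_pow_mul (K L : ℕ) : (K + L)! ≤ 2 ^ (K + L) * K ! * L ! := by
  rw [← Nat.add_choose_mul_factorial_mul_factorial K L]
  gcongr
  exact Nat.choose_le_two_pow _ _

lemma factorial_add_rpow_le {s : ℝ} (hs : 0 ≤ s) (K L : ℕ) :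
    ((K + L)! : ℝ) ^ s ≤ ((2 : ℝ) ^ s) ^ (K + L) * (K ! : ℝ) ^ s * (L ! : ℝ) ^ s := by
  rw [Real.rpow_pow_comm zero_le_two, ← Real.mul_rpow (by positivity) (by positivity),
    ← Real.mul_rpow (by positivity) (by positivity)]
  gcongr
  exact_mod_cast Nat.factorial_add_le_two_pow_mul K L

lemma pow_mul_le_of_le_mul_one_add_rpow_neg {r y C : ℝ} {N : ℕ} (hr : 0 ≤ r) (hC : 0 ≤ C)
    (h : y ≤ C * (1 + r) ^ (-(N : ℝ))) : r ^ N * y ≤ C := by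
  rw [Real.rpow_neg (by positivity), Real.rpow_natCast] at h
  calc r ^ N * y ≤ r ^ N * (C * ((1 + r) ^ N)⁻¹) := by gcongr
    _ = C * (r ^ N / (1 + r) ^ N) := by ring
    _ ≤ C * 1 := by gcongr; exact div_le_one_of_le₀ (by gcongr; linarith) (by positivity)
    _ = C := mul_one C

lemma lt_pow_mul_of_mul_rpow_neg_lt {a r y : ℝ} {N : ℕ} (hr : 0 < r)
    (h : a * r ^ (-(N : ℝ)) < y) : a < r ^ N * y := by
  rwa [Real.rpow_neg hr.le, Real.rpow_natCast, ← div_eq_mul_inv, div_lt_iff₀ (by positivity),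
    mul_comm] at h

lemma exists_inv_pow_le_mul_pow {w : ℕ → ℝ} (hw : ∀ k, 1 ≤ w k) (hw_top : Tendsto w atTop atTop)
    {ε : ℝ} (hε : 0 < ε) : ∃ C > 0, ∀ k, (w k ^ k)⁻¹ ≤ C * ε ^ k := by
  obtain ⟨k₀, hk₀⟩ := tendsto_atTop_atTop.1 hw_top ε⁻¹
  have hmax : 1 ≤ max 1 ε⁻¹ := le_max_left _ _
  refine ⟨max 1 ε⁻¹ ^ k₀, by positivity, fun k => ?_⟩
  rcases le_or_gt k₀ k with hk | hk
  · calc (w k ^ k)⁻¹ ≤ (ε⁻¹ ^ k)⁻¹ := by gcongr; exact hk₀ k hk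
      _ = 1 * ε ^ k := by rw [inv_pow, inv_inv, one_mul]
      _ ≤ max 1 ε⁻¹ ^ k₀ * ε ^ k := by gcongr; exact one_le_pow₀ hmax
  · calc (w k ^ k)⁻¹ ≤ 1 := inv_le_one_of_one_le₀ (one_le_pow₀ (hw k))
      _ = ε⁻¹ ^ k * ε ^ k := by rw [← mul_pow, inv_mul_cancel₀ hε.ne', one_pow]
      _ ≤ max 1 ε⁻¹ ^ k₀ * ε ^ k := by
        gcongr
        exact (pow_le_pow_left₀ (by positivity) (le_max_right _ _) k).trans
          (pow_le_pow_right₀ hmax hk.le)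

lemma summable_mul_pow_of_le_mul_pow {b : ℕ → ℝ} (hb : ∀ k, 0 ≤ b k)
    (hb_le : ∀ ε > 0, ∃ C > 0, ∀ k, b k ≤ C * ε ^ k) {r : ℝ} (hr : 0 ≤ r) :
    Summable fun k => b k * r ^ k := by
  obtain ⟨C, hC, hbC⟩ := hb_le (2 * (r + 1))⁻¹ (by positivity)
  refine Summable.of_nonneg_of_le (fun k => by have := hb k; positivity) (fun k => ?_)
    (summable_geometric_two.mul_left C)
  have hq : (2 * (r + 1))⁻¹ * r ≤ 1 / 2 := by
    rw [inv_mul_le_iff₀ (by positivity)]; linarith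
  calc b k * r ^ k ≤ C * (2 * (r + 1))⁻¹ ^ k * r ^ k := by gcongr; exact hbC k
    _ = C * ((2 * (r + 1))⁻¹ * r) ^ k := by rw [mul_pow, mul_assoc]
    _ ≤ C * (1 / 2) ^ k := by gcongr

section witnesses

variable {E F : Type*} [SeminormedAddGroup E] [SeminormedAddGroup F] {f : E → F} {s : ℝ}

lemma frequently_exists_pow_mul_factorial_lt
    (hdecay : ∀ N : ℕ, ∃ C, ∀ ξ, ‖ξ‖ ^ N * ‖f ξ‖ ≤ C)
    (hgrowth : ∀ M : ℝ, 1 < M → ∃ N : ℕ, ∃ ξ, M ^ (N + 1) * (N ! : ℝ) ^ s < ‖ξ‖ ^ N * ‖f ξ‖)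
    (hs : 0 ≤ s) {M : ℝ} (hM : 1 ≤ M) :
    ∃ᶠ N in atTop, ∃ ξ, M ^ (N + 1) * (N ! : ℝ) ^ s < ‖ξ‖ ^ N * ‖f ξ‖ := by
  choose C hC using hdecay
  rw [frequently_atTop]
  intro B
  obtain ⟨A, hA⟩ := ((Set.finite_Iio B).image C).bddAbove
  obtain ⟨N, ξ, hξ⟩ := hgrowth (max M A + 1) (by linarith [le_max_left M A])
  have hfact : 1 ≤ (N ! : ℝ) ^ s := Real.one_le_rpow (by exact_mod_cast N.factorial_pos) hs
  have hM' : max M A + 1 ≤ (max M A + 1) ^ (N + 1) * (N ! : ℝ) ^ s :=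
    (le_self_pow₀ (by linarith [le_max_left M A]) N.succ_ne_zero).trans
      (le_mul_of_one_le_right (by positivity) hfact)
  -- for `N < B`, rapid decay caps the left side of the witness inequality by `C N ≤ A`
  refine ⟨N, not_lt.1 fun hNB => ?_, ξ, ?_⟩
  · have : C N ≤ A := hA ⟨N, hNB, rfl⟩
    linarith [le_max_right M A, hC N ξ]
  · calc M ^ (N + 1) * (N ! : ℝ) ^ s ≤ (max M A + 1) ^ (N + 1) * (N ! : ℝ) ^ s := by
          gcongr; linarith [le_max_left M A]
      _ < ‖ξ‖ ^ N * ‖f ξ‖ := hξ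

end witnesses

/-- For strictly monotone `K` this is `#{u | K u < i}`; the bound `u < i` is automatic. -/
def witnessCount (K : ℕ → ℕ) (i : ℕ) : ℕ := #{u ∈ range i | K u < i}

section witnessCount

variable {K : ℕ → ℕ}

lemma witnessCount_le (hK : StrictMono K) {t L i : ℕ} (hi : i ≤ K t + L) :
    witnessCount K i ≤ t + L := by
  calc witnessCount K i ≤ #(range (t + L)) := card_le_card fun u hu => ?_
    _ = t + L := card_range _
  rw [mem_filter, mem_range] at hu
  have := hK.add_le_nat L t
  exact mem_range.2 (hK.lt_iff_lt.1 (by rw [add_comm t L]; omega))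

lemma le_witnessCount (hK : StrictMono K) {A i : ℕ} (hi : K A < i) :
    A + 1 ≤ witnessCount K i := by
  calc A + 1 = #(range (A + 1)) := (card_range _).symm
    _ ≤ witnessCount K i := card_le_card fun u hu => ?_
  have hKu : K u ≤ K A := hK.monotone (Nat.lt_succ_iff.1 (mem_range.1 hu))
  have := hK.le_apply (x := u)
  exact mem_filter.2 ⟨mem_range.2 (by omega), by omega⟩

lemma tendsto_witnessCount (hK : StrictMono K) : Tendsto (witnessCount K) atTop atTop :=
  tendsto_atTop_atTop.2 fun A =>
    ⟨K A + 1, fun _ hi => (Nat.le_succ A).trans (le_witnessCount hK hi)⟩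

end witnessCount

noncomputable def symbolCoeff (s : ℝ) (K : ℕ → ℕ) (k : ℕ) : ℝ :=
  ((k ! : ℝ) ^ s * ((witnessCount K k : ℝ) + 1) ^ k)⁻¹

noncomputable def witnessScale (s : ℝ) (t : ℕ) : ℝ := 2 ^ s * (2 * (t + 1))

section symbolCoeff

variable {s : ℝ} {K : ℕ → ℕ}

lemma symbolCoeff_pos (k : ℕ) : 0 < symbolCoeff s K k := by
  unfold symbolCoeff; positivity

lemma exists_symbolCoeff_le (hK : StrictMono K) {ε : ℝ} (hε : 0 < ε) :
    ∃ C > 0, ∀ k, symbolCoeff s K k ≤ C * ε ^ k / (k ! : ℝ) ^ s := by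
  have hw_top : Tendsto (fun k => (witnessCount K k : ℝ) + 1) atTop atTop :=
    tendsto_atTop_add_const_right _ _ (tendsto_natCast_atTop_atTop.comp (tendsto_witnessCount hK))
  obtain ⟨C, hC, hCε⟩ := exists_inv_pow_le_mul_pow (fun k => by simp) hw_top hε
  refine ⟨C, hC, fun k => ?_⟩
  rw [symbolCoeff, mul_inv, ← div_eq_inv_mul]
  gcongr
  exact hCε k

lemma one_le_witnessScale (hs : 0 ≤ s) (t : ℕ) : 1 ≤ witnessScale s t := by
  have := Real.one_le_rpow one_le_two hs
  unfold witnessScale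
  nlinarith

lemma div_le_symbolCoeff_mul (hs : 0 ≤ s) (hK : StrictMono K) {t L : ℕ} (hL : L ≤ t + 1) :
    witnessScale s t / (L ! : ℝ) ^ s ≤
      symbolCoeff s K (K t + L) * (witnessScale s t ^ 2) ^ (K t + 1) * ((K t)! : ℝ) ^ s := by
  set μ := witnessScale s t
  have hμ : 1 ≤ μ := one_le_witnessScale hs t
  have hw : (2 : ℝ) ^ s * ((witnessCount K (K t + L) : ℝ) + 1) ≤ μ := by
    have : (witnessCount K (K t + L) : ℝ) ≤ t + L := by exact_mod_cast witnessCount_le hK le_rfl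
    unfold μ witnessScale
    gcongr
    have : (L : ℝ) ≤ t + 1 := by exact_mod_cast hL
    linarith
  obtain ⟨j, hj⟩ : ∃ j, K t + 1 = L + j := ⟨K t + 1 - L, by have := hK.le_apply (x := t); omega⟩
  have hden : ((K t + L)! : ℝ) ^ s * ((witnessCount K (K t + L) : ℝ) + 1) ^ (K t + L) ≤
      μ ^ (K t + L) * ((K t)! : ℝ) ^ s * (L ! : ℝ) ^ s := by
    calc ((K t + L)! : ℝ) ^ s * ((witnessCount K (K t + L) : ℝ) + 1) ^ (K t + L)
        ≤ ((2 : ℝ) ^ s) ^ (K t + L) * ((K t)! : ℝ) ^ s * (L ! : ℝ) ^ s *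
            ((witnessCount K (K t + L) : ℝ) + 1) ^ (K t + L) := by
          gcongr; exact factorial_add_rpow_le hs _ _
      _ = ((2 : ℝ) ^ s * ((witnessCount K (K t + L) : ℝ) + 1)) ^ (K t + L) *
            ((K t)! : ℝ) ^ s * (L ! : ℝ) ^ s := by rw [mul_pow]; ring
      _ ≤ μ ^ (K t + L) * ((K t)! : ℝ) ^ s * (L ! : ℝ) ^ s := by gcongr
  have hsq : (μ ^ 2) ^ (K t + 1) = μ ^ (K t + L) * μ ^ (j + 1) := by
    rw [← pow_mul, ← pow_add]; congr 1; omega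
  rw [symbolCoeff, div_le_iff₀ (by positivity), mul_assoc, mul_assoc, inv_mul_eq_div,
    ← mul_assoc, le_div_iff₀ (by positivity)]
  calc μ * (((K t + L)! : ℝ) ^ s * ((witnessCount K (K t + L) : ℝ) + 1) ^ (K t + L))
      ≤ μ ^ (j + 1) * (μ ^ (K t + L) * ((K t)! : ℝ) ^ s * (L ! : ℝ) ^ s) :=
        mul_le_mul (le_self_pow₀ hμ j.succ_ne_zero) hden (by positivity) (by positivity)
    _ = (μ ^ 2) ^ (K t + 1) * ((K t)! : ℝ) ^ s * (L ! : ℝ) ^ s := by rw [hsq]; ring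

lemma summable_symbolCoeff_mul_pow (hs : 0 ≤ s) (hK : StrictMono K) {r : ℝ} (hr : 0 ≤ r) :
    Summable fun k => symbolCoeff s K k * r ^ k := by
  refine summable_mul_pow_of_le_mul_pow (fun k => (symbolCoeff_pos k).le) (fun ε hε => ?_) hr
  obtain ⟨C, hC, hCε⟩ := exists_symbolCoeff_le (s := s) hK hε
  refine ⟨C, hC, fun k => (hCε k).trans (div_le_self (by positivity) ?_)⟩
  exact Real.one_le_rpow (by exact_mod_cast k.factorial_pos) hs

variable {E F : Type*} [SeminormedAddGroup E] [SeminormedAddGroup F] {f : E → F}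

lemma pow_mul_witnessScale_div_le_tsum (hs : 0 ≤ s) (hK : StrictMono K) {t L : ℕ}
    (hL : L ≤ t + 1) {x : E}
    (hx : (witnessScale s t ^ 2) ^ (K t + 1) * ((K t)! : ℝ) ^ s ≤ ‖x‖ ^ K t * ‖f x‖) :
    ‖x‖ ^ L * (witnessScale s t / (L ! : ℝ) ^ s) ≤
      (∑' k, symbolCoeff s K k * ‖x‖ ^ k) * ‖f x‖ := by
  have hb := (symbolCoeff_pos (s := s) (K := K) (K t + L)).le
  calc ‖x‖ ^ L * (witnessScale s t / (L ! : ℝ) ^ s)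
      ≤ ‖x‖ ^ L * (symbolCoeff s K (K t + L) *
          ((witnessScale s t ^ 2) ^ (K t + 1) * ((K t)! : ℝ) ^ s)) := by
        gcongr ‖x‖ ^ L * ?_
        exact (div_le_symbolCoeff_mul hs hK hL).trans_eq (mul_assoc _ _ _)
    _ ≤ ‖x‖ ^ L * (symbolCoeff s K (K t + L) * (‖x‖ ^ K t * ‖f x‖)) := by gcongr
    _ = symbolCoeff s K (K t + L) * ‖x‖ ^ (K t + L) * ‖f x‖ := by ring
    _ ≤ (∑' k, symbolCoeff s K k * ‖x‖ ^ k) * ‖f x‖ := by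
        gcongr
        exact (summable_symbolCoeff_mul_pow hs hK (norm_nonneg _)).le_tsum _
          fun k _ => mul_nonneg (symbolCoeff_pos k).le (by positivity)

lemma exists_lt_tsum_symbolCoeff_mul (hs : 0 ≤ s) (hK : StrictMono K) {ξ : ℕ → E}
    (hξ : ∀ t, (witnessScale s t ^ 2) ^ (K t + 1) * ((K t)! : ℝ) ^ s < ‖ξ t‖ ^ K t * ‖f (ξ t)‖)
    (N₀ : ℕ) {C : ℝ} (hC : 0 ≤ C) :
    ∃ t, C * (1 + ‖ξ t‖) ^ N₀ < (∑' k, symbolCoeff s K k * ‖ξ t‖ ^ k) * ‖f (ξ t)‖ := by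
  obtain ⟨n, hn⟩ := exists_nat_gt (C * 2 ^ N₀ * (N₀ ! : ℝ) ^ s)
  set t := max N₀ n
  set μ := witnessScale s t
  set r := ‖ξ t‖
  have hμ : C * 2 ^ N₀ * (N₀ ! : ℝ) ^ s < μ := by
    have : (n : ℝ) ≤ t := by exact_mod_cast le_max_right N₀ n
    have : (1 : ℝ) ≤ 2 ^ s := Real.one_le_rpow one_le_two hs
    unfold μ witnessScale
    nlinarith
  have hfact : 1 ≤ (N₀ ! : ℝ) ^ s := Real.one_le_rpow (by exact_mod_cast N₀.factorial_pos) hs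
  refine ⟨t, ?_⟩
  rcases le_total r 1 with hr | hr
  · calc C * (1 + r) ^ N₀ ≤ C * 2 ^ N₀ := by gcongr; linarith
      _ < r ^ 0 * (μ / (0 ! : ℝ) ^ s) := by
          simp only [pow_zero, Nat.factorial_zero, Nat.cast_one, Real.one_rpow, one_mul, div_one]
          exact (le_mul_of_one_le_right (by positivity) hfact).trans_lt hμ
      _ ≤ _ := pow_mul_witnessScale_div_le_tsum hs hK (Nat.zero_le _) (hξ t).le
  · calc C * (1 + r) ^ N₀ ≤ C * 2 ^ N₀ * r ^ N₀ := by
          rw [mul_assoc, ← mul_pow]; gcongr; linarith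
      _ < r ^ N₀ * (μ / (N₀ ! : ℝ) ^ s) := by
          rw [mul_comm (r ^ N₀)]
          gcongr
          rw [lt_div_iff₀ (by positivity)]
          exact hμ
      _ ≤ _ := pow_mul_witnessScale_div_le_tsum hs hK (by omega) (hξ t).le

end symbolCoeff


theorem exists_symbol_coefficients_general (m : ℕ) (s : ℝ) (hs : 1 ≤ s)
    (f : EuclideanSpace ℝ (Fin m) → ℂ)
    (hdecay : ∀ N : ℕ, ∃ C : ℝ, 0 < C ∧ ∀ ξ : EuclideanSpace ℝ (Fin m),
      ‖f ξ‖ ≤ C * (1 + ‖ξ‖) ^ (-(N : ℝ)))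
    (hnotGevrey : ∀ M : ℝ, 1 < M → ∃ N : ℕ, ∃ ξ : EuclideanSpace ℝ (Fin m), ξ ≠ 0 ∧
      M ^ (N + 1) * ((Nat.factorial N : ℝ)) ^ s * ‖ξ‖ ^ (-(N : ℝ)) < ‖f ξ‖) :
    ∃ b : ℕ → ℝ, (∀ k, 0 ≤ b k) ∧
      (∀ ε : ℝ, 0 < ε → ∃ C : ℝ, 0 < C ∧ ∀ k : ℕ,
        b k ≤ C * ε ^ k / ((Nat.factorial k : ℝ)) ^ s) ∧
      (∀ N₀ : ℕ, ∀ C : ℝ, 0 < C → ∃ ξ : EuclideanSpace ℝ (Fin m),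
        C * (1 + ‖ξ‖) ^ N₀ < (∑' k : ℕ, b k * ‖ξ‖ ^ k) * ‖f ξ‖) := by
  have hs₀ : 0 ≤ s := zero_le_one.trans hs
  have hdecay' : ∀ N : ℕ, ∃ C, ∀ ξ, ‖ξ‖ ^ N * ‖f ξ‖ ≤ C := fun N =>
    let ⟨C, hC, hfC⟩ := hdecay N
    ⟨C, fun ξ => pow_mul_le_of_le_mul_one_add_rpow_neg (norm_nonneg ξ) hC.le (hfC ξ)⟩
  have hgrowth : ∀ M : ℝ, 1 < M → ∃ N : ℕ, ∃ ξ, M ^ (N + 1) * (N ! : ℝ) ^ s < ‖ξ‖ ^ N * ‖f ξ‖ :=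
    fun M hM =>
      let ⟨N, ξ, hξ, hlt⟩ := hnotGevrey M hM
      ⟨N, ξ, lt_pow_mul_of_mul_rpow_neg_lt (norm_pos_iff.2 hξ) hlt⟩
  obtain ⟨K, hK, hwitness⟩ := extraction_forall_of_frequently fun t =>
    frequently_exists_pow_mul_factorial_lt hdecay' hgrowth hs₀
      (one_le_pow₀ (one_le_witnessScale hs₀ t) : 1 ≤ witnessScale s t ^ 2)
  choose ξ hξ using hwitness
  refine ⟨symbolCoeff s K, fun k => (symbolCoeff_pos k).le, fun ε hε => ?_, fun N₀ C hC => ?_⟩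
  · obtain ⟨C, hC, hb⟩ := exists_symbolCoeff_le (s := s) hK hε
    exact ⟨C, hC, hb⟩
  · obtain ⟨t, ht⟩ := exists_lt_tsum_symbolCoeff_mul hs₀ hK hξ N₀ hC.le
    exact ⟨ξ t, ht⟩

/-- Given a continuous, rapidly decreasing `f` whose decay fails the Gevrey-`s` rate,
there is a nonnegative sequence `(b_k)` with `{p!^s}`-type bounds such that
`(Σ_k b_k ‖ξ‖^k)·|f(ξ)|` is not bounded by any polynomial. -/
theorem exists_symbol_coefficients (m : ℕ) (hm : 1 ≤ m) (s : ℝ) (hs : 1 ≤ s)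
    (f : EuclideanSpace ℝ (Fin m) → ℂ) (hf : Continuous f)
    (hdecay : ∀ N : ℕ, ∃ C : ℝ, 0 < C ∧ ∀ ξ : EuclideanSpace ℝ (Fin m),
      ‖f ξ‖ ≤ C * (1 + ‖ξ‖) ^ (-(N : ℝ)))
    (hnotGevrey : ∀ M : ℝ, 1 < M → ∃ N : ℕ, ∃ ξ : EuclideanSpace ℝ (Fin m), ξ ≠ 0 ∧
      M ^ (N + 1) * ((Nat.factorial N : ℝ)) ^ s * ‖ξ‖ ^ (-(N : ℝ)) < ‖f ξ‖) :
    ∃ b : ℕ → ℝ, (∀ k, 0 ≤ b k) ∧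
      (∀ ε : ℝ, 0 < ε → ∃ C : ℝ, 0 < C ∧ ∀ k : ℕ,
        b k ≤ C * ε ^ k / ((Nat.factorial k : ℝ)) ^ s) ∧
      (∀ N₀ : ℕ, ∀ C : ℝ, 0 < C → ∃ ξ : EuclideanSpace ℝ (Fin m),
        C * (1 + ‖ξ‖) ^ N₀ < (∑' k : ℕ, b k * ‖ξ‖ ^ k) * ‖f ξ‖) :=
  exists_symbol_coefficients_general m s hs f hdecay hnotGevrey
end

section
/- Let a : ℝ → ℂ be continuous, let x₀ ∈ ℝ and R > 0, set I = [x₀ − R, x₀ + R], and let M be a real number with M > 1 and M ≥ 2 · sup_{x ∈ I} |a(x)|². Then for every x ∈ I and every (ξ, η) ∈ ℝ² with (ξ, η) ≠ (0, 0), the complex number (ξ + a(x)·η)² + M·η² is nonzero. -/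
/-- Ellipticity of `Q = M (∂_y)² + L²` on `I × ℝ`, where `L = ∂_x + a(x) ∂_y` is of
tube type: if `M > 1` and `M ≥ 2 sup_{x ∈ I} |a(x)|²`, then the principal symbol
`(ξ + a(x)η)² + Mη²` does not vanish at any nonzero real covector `(ξ, η)`. -/
theorem tube_symbol_elliptic (a : ℝ → ℂ) (ha : Continuous a) (x₀ R : ℝ) (hR : 0 < R)
    (M : ℝ) (hM1 : 1 < M)
    (hM : ∀ x ∈ Set.Icc (x₀ - R) (x₀ + R), 2 * ‖a x‖ ^ 2 ≤ M) :
    ∀ x ∈ Set.Icc (x₀ - R) (x₀ + R), ∀ ξ η : ℝ, (ξ, η) ≠ (0, 0) →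
      ((ξ : ℂ) + a x * (η : ℂ)) ^ 2 + (M : ℂ) * (η : ℂ) ^ 2 ≠ 0 := by
  intro x hx ξ η hne h
  have hMx := hM x hx
  have hnorm : ‖a x‖ ^ 2 = (a x).re ^ 2 + (a x).im ^ 2 := by
    rw [← Complex.normSq_eq_norm_sq]
    simp [Complex.normSq_apply, pow_two]
  rw [hnorm] at hMx
  rw [Complex.ext_iff] at h
  obtain ⟨h1, h2⟩ := h
  simp [pow_two, Complex.add_re, Complex.add_im, Complex.mul_re, Complex.mul_im] at h1 h2
  have hξη : ¬ (ξ = 0 ∧ η = 0) := by simpa [Prod.ext_iff] using hne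
  rcases eq_or_ne η 0 with hη | hη
  · subst hη
    simp at h1
    rcases h1 with h1 | h1 <;> simp_all
  · nlinarith [sq_nonneg ξ, sq_nonneg η, sq_nonneg (ξ + (a x).re * η), sq_nonneg ((a x).im * η),
      mul_pos (mul_pos (by linarith : (0:ℝ) < M) (pow_pos (abs_pos.mpr hη) 2)) (pow_pos (abs_pos.mpr hη) 0),
      sq_abs η, mul_self_nonneg (η * η)]
end
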